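/- arXiv:2211.16908 — 9 statements merged into one kernel-verified Lean document; each statement's English description precedes it below -/
import Mathlib

section
/- For every real ν ≥ 1/2 and every real x > 1, the modified Bessel function of the first kind satisfies the explicit lower bound I_ν(x) ≥ (1/(ν + 1/2) - 1/(ν + 3/2)) · (1/(2^ν √π Γ(ν + 1/2))) · e^x / √x. -/
open MeasureTheory intervalIntegral Set

lemma gamma_nat_add_half (k : ℕ) :
    Real.Gamma ((k : ℝ) + 1/2) = Real.sqrt Real.pi * (2*k).factorial / (4^k * k.factorial) := by
  induction k with
  | zero =>
    simp only [Nat.cast_zero, zero_add, mul_zero, Nat.factorial_zero, pow_zero, Nat.cast_one]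
    rw [Real.Gamma_one_half_eq]; norm_num
  | succ n ih =>
    have h : ((n+1 : ℕ) : ℝ) + 1/2 = ((n : ℝ) + 1/2) + 1 := by push_cast; ring
    rw [h, Real.Gamma_add_one (by positivity), ih]
    have h1 : (2*(n+1)).factorial = (2*n+2) * ((2*n+1) * (2*n).factorial) := by
      have e1 : 2*(n+1) = (2*n+1) + 1 := by ring
      rw [e1, Nat.factorial_succ, Nat.factorial_succ]
    have h2 : (n+1).factorial = (n+1) * n.factorial := Nat.factorial_succ n
    rw [h1, h2]
    push_cast
    have hn : (0:ℝ) < (n.factorial : ℝ) := by positivity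
    have h2n : (0:ℝ) < ((2*n).factorial : ℝ) := by exact_mod_cast Nat.factorial_pos _
    field_simp
    ring

lemma real_beta {a b : ℝ} (ha : 0 < a) (hb : 0 < b) :
    ∫ u in (0:ℝ)..1, u^(a-1) * (1-u)^(b-1) = Real.Gamma a * Real.Gamma b / Real.Gamma (a+b) := by
  have key := Complex.Gamma_mul_Gamma_eq_betaIntegral (s := (a:ℂ)) (t := (b:ℂ))
    (by simpa using ha) (by simpa using hb)
  have hbeta : Complex.betaIntegral (a:ℂ) (b:ℂ)
      = ((∫ u in (0:ℝ)..1, u^(a-1) * (1-u)^(b-1) : ℝ) : ℂ) := by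
    rw [Complex.betaIntegral, ← intervalIntegral.integral_ofReal]
    apply intervalIntegral.integral_congr
    intro x hx
    rw [uIcc_of_le (by norm_num : (0:ℝ) ≤ 1)] at hx
    obtain ⟨hx0, hx1⟩ := hx
    have ea : (a:ℂ) - 1 = ((a-1 : ℝ) : ℂ) := by push_cast; ring
    have eb : (b:ℂ) - 1 = ((b-1 : ℝ) : ℂ) := by push_cast; ring
    have ex : (1:ℂ) - (x:ℂ) = ((1 - x : ℝ) : ℂ) := by push_cast; ring
    simp only []
    rw [ea, eb, ex, ← Complex.ofReal_cpow hx0, ← Complex.ofReal_cpow (by linarith)]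
    push_cast
    ring
  rw [hbeta, ← Complex.ofReal_add, Complex.Gamma_ofReal, Complex.Gamma_ofReal,
    Complex.Gamma_ofReal, ← Complex.ofReal_mul, ← Complex.ofReal_mul] at key
  have hG : Real.Gamma (a+b) ≠ 0 := (Real.Gamma_pos_of_pos (by linarith)).ne'
  have h2 := Complex.ofReal_inj.mp key
  field_simp
  linarith [h2]

lemma cont_rpow_helper {μ : ℝ} (hμ : 0 ≤ μ) {f : ℝ → ℝ} (hf : Continuous f) :
    Continuous (fun u => (f u) ^ μ) :=
  hf.rpow_const (fun _ => Or.inr hμ)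

lemma Bk_sub {ν : ℝ} (hν : 1/2 ≤ ν) (k : ℕ) :
    (∫ t in (0:ℝ)..1, (2*t) • ((1-t^2)^(ν-1/2) * (t^2)^((k:ℝ)-1/2)))
      = ∫ u in (0:ℝ)..1, (1-u)^(ν-1/2) * u^((k:ℝ)-1/2) := by
  have hμ : (0:ℝ) ≤ ν - 1/2 := by linarith
  have hk : (-1:ℝ) < (k:ℝ)-1/2 := by
    have := Nat.cast_nonneg (α := ℝ) k; linarith
  set g : ℝ → ℝ := fun u => (1-u)^(ν-1/2) * u^((k:ℝ)-1/2) with hg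
  have hgint : IntervalIntegrable g volume 0 1 := by
    apply IntervalIntegrable.continuousOn_mul
    · exact intervalIntegrable_rpow' hk
    · exact (cont_rpow_helper hμ (continuous_const.sub continuous_id)).continuousOn
  have key := intervalIntegral.integral_comp_smul_deriv''' (a := (0:ℝ)) (b := 1)
    (f := fun t => t^2) (f' := fun t => 2*t) (g := g)
    ((continuous_pow 2).continuousOn)
    (by
      intro x hx
      simpa using ((hasDerivAt_pow 2 x).hasDerivWithinAt (s := Ioi x)))
    (by
      apply ContinuousOn.mono (s := {u : ℝ | 0 < u})
      · intro u hu
        apply ContinuousAt.continuousWithinAt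
        apply ContinuousAt.mul
        · exact ((cont_rpow_helper hμ (continuous_const.sub continuous_id))).continuousAt
        · exact Real.continuousAt_rpow_const u _ (Or.inl (ne_of_gt hu))
      · rintro u ⟨x, hx, rfl⟩
        norm_num at hx
        simp only [mem_setOf_eq]
        exact pow_pos hx.1 2)
    (by
      apply IntegrableOn.mono_set
        ((intervalIntegrable_iff_integrableOn_Icc_of_le (by norm_num)).mp hgint)
      rintro u ⟨x, hx, rfl⟩
      rw [uIcc_of_le (by norm_num : (0:ℝ) ≤ 1), mem_Icc] at hx
      simp only [mem_Icc]
      constructor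
      · positivity
      · nlinarith [hx.1, hx.2])
    (by
      rw [uIcc_of_le (by norm_num : (0:ℝ) ≤ 1)]
      have hcont : Continuous (fun t : ℝ => (2*(1-t^2)^(ν-1/2)) * t^(2*k)) := by
        apply Continuous.mul
        · exact continuous_const.mul
            (cont_rpow_helper hμ (continuous_const.sub (continuous_pow 2)))
        · exact continuous_pow _
      apply (hcont.integrableOn_Icc).congr
      have hae : ∀ᵐ t ∂(volume : Measure ℝ), t ≠ 0 := by
        rw [MeasureTheory.ae_iff]
        convert Real.volume_singleton (a := (0:ℝ)) using 2
        ext t; simp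
      filter_upwards [MeasureTheory.ae_restrict_mem measurableSet_Icc,
        MeasureTheory.ae_restrict_of_ae hae] with t htI ht
      have h : 0 < t := lt_of_le_of_ne htI.1 (Ne.symm ht)
      have e1 : ((2:ℕ):ℝ) * ((k:ℝ)-1/2) = 2*(k:ℝ)-1 := by push_cast; ring
      have h2 : (t^2 : ℝ)^((k:ℝ)-1/2) = t^(2*(k:ℝ)-1) := by
        rw [← Real.rpow_natCast t 2, ← Real.rpow_mul h.le, e1]
      have h3 : t * t^(2*(k:ℝ)-1) = t^(2*k : ℕ) := by
        rw [← Real.rpow_natCast t (2*k)]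
        nth_rewrite 1 [← Real.rpow_one t]
        rw [← Real.rpow_add h]
        congr 1; push_cast; ring
      simp only [Function.comp_apply, smul_eq_mul, hg]
      rw [h2, ← h3]
      ring)
  simp only [hg] at key ⊢
  simpa using key
lemma Bk_eq {ν : ℝ} (hν : 1/2 ≤ ν) (k : ℕ) :
    ∫ t in (0:ℝ)..1, t^(2*k) * (1-t^2)^(ν-1/2)
      = Real.Gamma ((k:ℝ)+1/2) * Real.Gamma (ν+1/2) / (2 * Real.Gamma (((k:ℝ)+1/2)+(ν+1/2))) := by
  have hbeta : ∫ u in (0:ℝ)..1, (1-u)^(ν-1/2) * u^((k:ℝ)-1/2)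
      = Real.Gamma ((k:ℝ)+1/2) * Real.Gamma (ν+1/2) / Real.Gamma (((k:ℝ)+1/2)+(ν+1/2)) := by
    rw [← real_beta (a := (k:ℝ)+1/2) (b := ν+1/2) (by positivity) (by linarith)]
    apply intervalIntegral.integral_congr
    intro u _
    have e1 : (k:ℝ)+1/2-1 = (k:ℝ)-1/2 := by ring
    have e2 : ν+1/2-1 = ν-1/2 := by ring
    rw [e1, e2]; ring
  have hL : (∫ t in (0:ℝ)..1, (2*t) • ((1-t^2)^(ν-1/2) * (t^2)^((k:ℝ)-1/2)))
      = 2 * ∫ t in (0:ℝ)..1, t^(2*k) * (1-t^2)^(ν-1/2) := by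
    rw [intervalIntegral.integral_of_le (by norm_num : (0:ℝ) ≤ 1),
        intervalIntegral.integral_of_le (by norm_num : (0:ℝ) ≤ 1),
        ← MeasureTheory.integral_const_mul]
    apply MeasureTheory.setIntegral_congr_fun measurableSet_Ioc
    intro t ht
    have h : 0 < t := ht.1
    have e1 : ((2:ℕ):ℝ) * ((k:ℝ)-1/2) = 2*(k:ℝ)-1 := by push_cast; ring
    have h2 : (t^2 : ℝ)^((k:ℝ)-1/2) = t^(2*(k:ℝ)-1) := by
      rw [← Real.rpow_natCast t 2, ← Real.rpow_mul h.le, e1]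
    have h3 : t * t^(2*(k:ℝ)-1) = t^(2*k : ℕ) := by
      rw [← Real.rpow_natCast t (2*k)]
      nth_rewrite 1 [← Real.rpow_one t]
      rw [← Real.rpow_add h]
      congr 1; push_cast; ring
    simp only [smul_eq_mul]
    rw [h2, ← h3]
    ring
  have := Bk_sub hν k
  rw [hL, hbeta] at this
  rw [mul_comm 2 (Real.Gamma (((k:ℝ)+1/2)+(ν+1/2))), ← div_div]
  linarith [this]
lemma interchange {ν x : ℝ} (hν : 1/2 ≤ ν) (hx : 0 < x) :
    ∫ t in Ioc (0:ℝ) 1, Real.cosh (x*t) * (1-t^2)^(ν-1/2)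
      = ∑' k : ℕ, ∫ t in Ioc (0:ℝ) 1, (x*t)^(2*k)/((2*k).factorial : ℝ) * (1-t^2)^(ν-1/2) := by
  have hμ : (0:ℝ) ≤ ν - 1/2 := by linarith
  set f : ℕ → ℝ → ℝ := fun k t => (x*t)^(2*k)/((2*k).factorial : ℝ) * (1-t^2)^(ν-1/2) with hf
  have hcont : ∀ k, Continuous (f k) := by
    intro k
    exact (((continuous_const.mul continuous_id).pow _).div_const _).mul
      (cont_rpow_helper hμ (continuous_const.sub (continuous_pow 2)))
  have hmeas : ∀ k, AEStronglyMeasurable (f k) (volume.restrict (Ioc (0:ℝ) 1)) :=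
    fun k => (hcont k).aestronglyMeasurable
  have hbound : ∑' k, ∫⁻ t in Ioc (0:ℝ) 1, ‖f k t‖₊ ≠ ⊤ := by
    have h1 : ∀ k : ℕ, (∫⁻ t in Ioc (0:ℝ) 1, ‖f k t‖₊)
        ≤ ENNReal.ofReal (x^(2*k)/((2*k).factorial : ℝ)) := by
      intro k
      have h2 : (∫⁻ t in Ioc (0:ℝ) 1, ‖f k t‖₊)
          ≤ ∫⁻ _ in Ioc (0:ℝ) 1, ENNReal.ofReal (x^(2*k)/((2*k).factorial : ℝ)) := by
        apply MeasureTheory.setLIntegral_mono measurable_const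
        intro t ht
        have hfac : (0:ℝ) < ((2*k).factorial : ℝ) := by exact_mod_cast Nat.factorial_pos _
        have hxt : (0:ℝ) ≤ x*t := by nlinarith [ht.1]
        rw [← enorm_eq_nnnorm, ← ofReal_norm]
        apply ENNReal.ofReal_le_ofReal
        rw [Real.norm_eq_abs, abs_of_nonneg (mul_nonneg (by positivity) (Real.rpow_nonneg (by nlinarith [ht.1, ht.2]) _))]
        have hb1 : (x*t)^(2*k) ≤ x^(2*k) := by
          apply pow_le_pow_left₀ hxt
          nlinarith [ht.1, ht.2]
        have hb2 : (1-t^2)^(ν-1/2) ≤ 1 := by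
          apply Real.rpow_le_one (by nlinarith [ht.1, ht.2]) (by nlinarith [ht.1, ht.2]) hμ
        calc (x*t)^(2*k)/((2*k).factorial : ℝ) * (1-t^2)^(ν-1/2)
            ≤ (x*t)^(2*k)/((2*k).factorial : ℝ) * 1 := by
              apply mul_le_mul_of_nonneg_left hb2 (by positivity)
          _ ≤ x^(2*k)/((2*k).factorial : ℝ) := by
              rw [mul_one]
              gcongr
      calc (∫⁻ t in Ioc (0:ℝ) 1, ‖f k t‖₊) ≤ _ := h2
        _ = ENNReal.ofReal (x^(2*k)/((2*k).factorial : ℝ)) := by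
            rw [MeasureTheory.setLIntegral_const, Real.volume_Ioc]
            norm_num
    have h3 : ∑' k, (∫⁻ t in Ioc (0:ℝ) 1, ‖f k t‖₊)
        ≤ ∑' k : ℕ, ENNReal.ofReal (x^(2*k)/((2*k).factorial : ℝ)) :=
      ENNReal.tsum_le_tsum h1
    have h4 : ∑' k : ℕ, ENNReal.ofReal (x^(2*k)/((2*k).factorial : ℝ))
        = ENNReal.ofReal (Real.cosh x) := by
      rw [← ENNReal.ofReal_tsum_of_nonneg (fun k => by positivity)
        (Real.hasSum_cosh x).summable, (Real.hasSum_cosh x).tsum_eq]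
    exact ne_top_of_le_ne_top (by rw [h4]; exact ENNReal.ofReal_ne_top) h3
  have key := MeasureTheory.integral_tsum hmeas hbound
  rw [← key]
  apply MeasureTheory.setIntegral_congr_fun measurableSet_Ioc
  intro t _
  exact (((Real.hasSum_cosh (x*t)).mul_right ((1-t^2)^(ν-1/2))).tsum_eq).symm
lemma lower2 {μ x : ℝ} (hμ : 0 ≤ μ) (hx : 1 < x) :
    (1/x)^(μ+1) * (1/(μ+1) - 1/(μ+2)) ≤ ∫ s in (0:ℝ)..1, Real.exp (-(x*s)) * s^μ := by
  have hx0 : (0:ℝ) < x := by linarith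
  have hix : (0:ℝ) < 1/x := by positivity
  have hix1 : 1/x ≤ 1 := by rw [div_le_one hx0]; linarith
  have hμ1 : (-1:ℝ) < μ := by linarith
  have hI : ∀ a b : ℝ, IntervalIntegrable (fun s => Real.exp (-(x*s)) * s^μ) volume a b := by
    intro a b
    exact IntervalIntegrable.continuousOn_mul (intervalIntegrable_rpow' hμ1)
      (Continuous.continuousOn (by continuity))
  have hsplit : (∫ s in (0:ℝ)..(1/x), Real.exp (-(x*s)) * s^μ)
      ≤ ∫ s in (0:ℝ)..1, Real.exp (-(x*s)) * s^μ := by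
    rw [← intervalIntegral.integral_add_adjacent_intervals (hI 0 (1/x)) (hI (1/x) 1)]
    have h2 : 0 ≤ ∫ s in (1/x)..1, Real.exp (-(x*s)) * s^μ := by
      apply intervalIntegral.integral_nonneg hix1
      intro s hs
      have : 0 ≤ s := le_trans hix.le hs.1
      positivity
    linarith
  have hmono : (∫ s in (0:ℝ)..(1/x), (1 - x*s) * s^μ)
      ≤ ∫ s in (0:ℝ)..(1/x), Real.exp (-(x*s)) * s^μ := by
    apply intervalIntegral.integral_mono_on hix.le _ (hI 0 (1/x))
    · intro s hs
      have hs0 : 0 ≤ s := hs.1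
      have h1 : 1 - x*s ≤ Real.exp (-(x*s)) := by
        have := Real.add_one_le_exp (-(x*s)); linarith
      exact mul_le_mul_of_nonneg_right h1 (Real.rpow_nonneg hs0 μ)
    · apply IntervalIntegrable.continuousOn_mul (intervalIntegrable_rpow' hμ1)
        (Continuous.continuousOn (by continuity))
  have hcomp : (∫ s in (0:ℝ)..(1/x), (1 - x*s) * s^μ)
      = (1/x)^(μ+1) * (1/(μ+1) - 1/(μ+2)) := by
    have hcong : (∫ s in (0:ℝ)..(1/x), (1 - x*s) * s^μ)
        = ∫ s in (0:ℝ)..(1/x), (s^μ - x * s^(μ+1)) := by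
      apply intervalIntegral.integral_congr
      intro s hs
      rw [uIcc_of_le hix.le] at hs
      simp only []
      rcases eq_or_lt_of_le hs.1 with h | h
      · rw [← h, Real.zero_rpow (by linarith : μ + 1 ≠ 0)]
        ring
      · rw [Real.rpow_add_one (ne_of_gt h)]
        ring
    rw [hcong, intervalIntegral.integral_sub (intervalIntegrable_rpow' hμ1)
      ((intervalIntegrable_rpow' (by linarith)).const_mul x),
      integral_rpow (Or.inl hμ1), intervalIntegral.integral_const_mul,
      integral_rpow (Or.inl (by linarith : (-1:ℝ) < μ+1))]
    rw [Real.zero_rpow (by linarith : μ + 1 ≠ 0),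
      Real.zero_rpow (by linarith : μ + 1 + 1 ≠ 0)]
    have e1 : (1/x)^(μ+1+1) = (1/x)^(μ+1) * (1/x) := Real.rpow_add_one (ne_of_gt hix) _
    rw [e1]
    have hμ2 : μ + 1 ≠ 0 := by linarith
    have hμ3 : μ + 2 ≠ 0 := by linarith
    have hxne : x ≠ 0 := ne_of_gt hx0
    field_simp
    ring
  linarith [hmono, hsplit, hcomp.ge]

/-- The modified Bessel function of the first kind, defined by its power series
`I_ν(x) = ∑_{k=0}^∞ (x/2)^{2k+ν} / (k! Γ(k + ν + 1))`. -/
noncomputable def besselI (ν x : ℝ) : ℝ :=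
  ∑' k : ℕ, (x / 2) ^ (2 * (k : ℝ) + ν) / ((Nat.factorial k : ℝ) * Real.Gamma ((k : ℝ) + ν + 1))

lemma besselI_repr {ν x : ℝ} (hν : 1/2 ≤ ν) (hx : 0 < x) :
    besselI ν x = (x/2)^ν * (2/(Real.sqrt Real.pi * Real.Gamma (ν+1/2)))
      * ∫ t in Ioc (0:ℝ) 1, Real.cosh (x*t) * (1-t^2)^(ν-1/2) := by
  have hπ : (0:ℝ) < Real.sqrt Real.pi := Real.sqrt_pos.mpr Real.pi_pos
  have hΓν : (0:ℝ) < Real.Gamma (ν+1/2) := Real.Gamma_pos_of_pos (by linarith)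
  have h2 : ∀ k : ℕ, (∫ t in Ioc (0:ℝ) 1, (x*t)^(2*k)/(((2*k).factorial : ℝ)) * (1-t^2)^(ν-1/2))
      = (Real.sqrt Real.pi * Real.Gamma (ν+1/2)/2)
        * ((x/2)^(2*k)/((k.factorial : ℝ) * Real.Gamma ((k:ℝ)+ν+1))) := by
    intro k
    have e : ∀ t : ℝ, (x*t)^(2*k)/(((2*k).factorial : ℝ)) * (1-t^2)^(ν-1/2)
        = (x^(2*k)/(((2*k).factorial : ℝ))) * (t^(2*k) * (1-t^2)^(ν-1/2)) := by
      intro t; rw [mul_pow]; ring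
    simp_rw [e]
    rw [MeasureTheory.integral_const_mul,
      ← intervalIntegral.integral_of_le (by norm_num : (0:ℝ) ≤ 1), Bk_eq hν k,
      gamma_nat_add_half k]
    have earg : (k:ℝ)+1/2+(ν+1/2) = (k:ℝ)+ν+1 := by ring
    rw [earg]
    have hf1 : (0:ℝ) < ((2*k).factorial : ℝ) := by exact_mod_cast Nat.factorial_pos _
    have hf2 : (0:ℝ) < (k.factorial : ℝ) := by exact_mod_cast Nat.factorial_pos _
    have hΓk : (0:ℝ) < Real.Gamma ((k:ℝ)+ν+1) := by
      apply Real.Gamma_pos_of_pos; positivity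
    have epow : (x/2)^(2*k) = x^(2*k)/4^k := by
      rw [div_pow]; congr 1; rw [pow_mul]; norm_num
    rw [epow]
    have h4 : (0:ℝ) < 4^k := by positivity
    field_simp
  have hterm : ∀ k : ℕ, (x/2)^(2*(k:ℝ)+ν) = (x/2)^ν * (x/2)^(2*k : ℕ) := by
    intro k
    rw [show 2*(k:ℝ)+ν = ν + ((2*k : ℕ):ℝ) by push_cast; ring,
      Real.rpow_add (by positivity), Real.rpow_natCast]
  have hbes : besselI ν x
      = (x/2)^ν * ∑' k : ℕ, (x/2)^(2*k)/((k.factorial : ℝ) * Real.Gamma ((k:ℝ)+ν+1)) := by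
    rw [besselI, ← tsum_mul_left]
    congr 1; ext k
    rw [hterm k, mul_div_assoc]
  rw [hbes, interchange hν hx]
  have : ∑' k : ℕ, (∫ t in Ioc (0:ℝ) 1, (x*t)^(2*k)/(((2*k).factorial : ℝ)) * (1-t^2)^(ν-1/2))
      = (Real.sqrt Real.pi * Real.Gamma (ν+1/2)/2)
        * ∑' k : ℕ, (x/2)^(2*k)/((k.factorial : ℝ) * Real.Gamma ((k:ℝ)+ν+1)) := by
    rw [← tsum_mul_left]
    congr 1; ext k; exact h2 k
  rw [this]
  have hne : Real.sqrt Real.pi * Real.Gamma (ν+1/2) ≠ 0 := by positivity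
  field_simp

theorem besselI_explicit_lower_bound (ν x : ℝ) (hν : 1/2 ≤ ν) (hx : 1 < x) :
    (1 / (ν + 1/2) - 1 / (ν + 3/2)) * (1 / ((2 : ℝ) ^ ν * Real.sqrt Real.pi * Real.Gamma (ν + 1/2)))
      * Real.exp x / Real.sqrt x ≤ besselI ν x := by
  have hx0 : (0:ℝ) < x := by linarith
  have hμ : (0:ℝ) ≤ ν - 1/2 := by linarith
  have hπ : (0:ℝ) < Real.sqrt Real.pi := Real.sqrt_pos.mpr Real.pi_pos
  have hΓν : (0:ℝ) < Real.Gamma (ν+1/2) := Real.Gamma_pos_of_pos (by linarith)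
  set μ := ν - 1/2 with hμdef
  -- Step A : integral lower bound by exp/2 * (1-t)^μ
  have hIA : (∫ t in Ioc (0:ℝ) 1, Real.exp (x*t)/2 * (1-t)^μ)
      ≤ ∫ t in Ioc (0:ℝ) 1, Real.cosh (x*t) * (1-t^2)^μ := by
    apply MeasureTheory.setIntegral_mono_on
    · apply IntegrableOn.mono_set (t := Icc (0:ℝ) 1) _ Ioc_subset_Icc_self
      apply Continuous.integrableOn_Icc
      exact ((Real.continuous_exp.comp (continuous_const.mul continuous_id)).div_const 2).mul
        (cont_rpow_helper hμ (continuous_const.sub continuous_id))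
    · apply IntegrableOn.mono_set (t := Icc (0:ℝ) 1) _ Ioc_subset_Icc_self
      apply Continuous.integrableOn_Icc
      exact (Real.continuous_cosh.comp (continuous_const.mul continuous_id)).mul
        (cont_rpow_helper hμ (continuous_const.sub (continuous_pow 2)))
    · exact measurableSet_Ioc
    · intro t ht
      have h1 : Real.exp (x*t)/2 ≤ Real.cosh (x*t) := by
        rw [Real.cosh_eq]
        linarith [Real.exp_pos (-(x*t))]
      have h2 : (1-t)^μ ≤ (1-t^2)^μ := by
        apply Real.rpow_le_rpow (by nlinarith [ht.1, ht.2]) (by nlinarith [ht.1, ht.2]) hμ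
      apply mul_le_mul h1 h2 (Real.rpow_nonneg (by nlinarith [ht.1, ht.2]) μ)
        (le_of_lt (Real.cosh_pos _))
  -- Step B : interval integral form
  have hIB : (∫ t in Ioc (0:ℝ) 1, Real.exp (x*t)/2 * (1-t)^μ)
      = ∫ t in (0:ℝ)..1, Real.exp (x*t)/2 * (1-t)^μ :=
    (intervalIntegral.integral_of_le (by norm_num)).symm
  -- Step C : substitution s = 1 - t
  have hIC : (∫ t in (0:ℝ)..1, Real.exp (x*t)/2 * (1-t)^μ)
      = (Real.exp x/2) * ∫ s in (0:ℝ)..1, Real.exp (-(x*s)) * s^μ := by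
    have e1 : (∫ t in (0:ℝ)..1, Real.exp (x*t)/2 * (1-t)^μ)
        = ∫ t in (0:ℝ)..1, (fun s => Real.exp (x*(1-s))/2 * s^μ) (1-t) := by
      apply intervalIntegral.integral_congr
      intro t _
      simp only []
      norm_num
    rw [e1, intervalIntegral.integral_comp_sub_left (fun s => Real.exp (x*(1-s))/2 * s^μ) 1]
    norm_num
    rw [← intervalIntegral.integral_const_mul]
    apply intervalIntegral.integral_congr
    intro s _
    simp only []
    rw [show x*(1-s) = x + -(x*s) by ring, Real.exp_add]
    ring
  -- Step D : final bound
  have hID := lower2 hμ hx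
  -- representation
  rw [besselI_repr hν hx0]
  have hD : (0:ℝ) ≤ 1/(μ+1) - 1/(μ+2) := by
    rw [sub_nonneg]
    apply one_div_le_one_div_of_le (by linarith) (by linarith)
  have hchain : (Real.exp x/2) * ((1/x)^(μ+1) * (1/(μ+1) - 1/(μ+2)))
      ≤ ∫ t in Ioc (0:ℝ) 1, Real.cosh (x*t) * (1-t^2)^μ := by
    have h5 : (Real.exp x/2) * ((1/x)^(μ+1) * (1/(μ+1) - 1/(μ+2)))
        ≤ (Real.exp x/2) * ∫ s in (0:ℝ)..1, Real.exp (-(x*s)) * s^μ := by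
      apply mul_le_mul_of_nonneg_left hID (by positivity)
    calc (Real.exp x/2) * ((1/x)^(μ+1) * (1/(μ+1) - 1/(μ+2))) ≤ _ := h5
      _ = ∫ t in Ioc (0:ℝ) 1, Real.exp (x*t)/2 * (1-t)^μ := by rw [hIB, hIC]
      _ ≤ _ := hIA
  have hcoef : (0:ℝ) ≤ (x/2)^ν * (2/(Real.sqrt Real.pi * Real.Gamma (ν+1/2))) := by positivity
  have hfinal := mul_le_mul_of_nonneg_left hchain hcoef
  refine le_trans (le_of_eq ?_) hfinal
  -- algebraic identity
  have e2 : μ+1 = ν+1/2 := by rw [hμdef]; ring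
  have e3 : μ+2 = ν+3/2 := by rw [hμdef]; ring
  rw [e2, e3]
  have e4 : (x/2)^ν = x^ν/(2:ℝ)^ν := Real.div_rpow hx0.le (by norm_num) ν
  have e5 : (1/x)^(ν+1/2) = (x^(ν+1/2))⁻¹ := by
    rw [one_div, Real.inv_rpow hx0.le]
  have e6 : x^(ν+1/2 : ℝ) = x^ν * Real.sqrt x := by
    rw [Real.rpow_add hx0, Real.sqrt_eq_rpow]
  have hxν : (0:ℝ) < x^ν := Real.rpow_pos_of_pos hx0 ν
  have hsx : (0:ℝ) < Real.sqrt x := Real.sqrt_pos.mpr hx0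
  have h2ν : (0:ℝ) < (2:ℝ)^ν := Real.rpow_pos_of_pos (by norm_num) ν
  rw [e4, e5, e6]
  field_simp
end

section
/- For all real x > 0 and all real ν ≥ 1, the modified Bessel functions of the first kind satisfy I_ν(x) ≥ I_{ν-1}(x) · (√(x² + ν²) - ν)/x. -/
open Finset Real Polynomial

namespace BesselAux

/-- The `k`-th term of the Bessel-I series. -/
noncomputable def term (x ν : ℝ) (k : ℕ) : ℝ :=
  (x / 2) ^ (2 * (k : ℝ) + ν) / ((Nat.factorial k : ℝ) * Real.Gamma ((k : ℝ) + ν + 1))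

lemma term_pos {x ν : ℝ} (hx : 0 < x) (hν : -1 < ν) (k : ℕ) : 0 < term x ν k := by
  have h1 : 0 < (k : ℝ) + ν + 1 := by
    have : (0:ℝ) ≤ k := Nat.cast_nonneg k
    linarith
  have h2 : 0 < Real.Gamma ((k : ℝ) + ν + 1) := Real.Gamma_pos_of_pos h1
  have h3 : 0 < (x / 2) ^ (2 * (k : ℝ) + ν) := Real.rpow_pos_of_pos (by linarith) _
  have h4 : 0 < (Nat.factorial k : ℝ) := by positivity
  exact div_pos h3 (by positivity)

lemma term_succ {x ν : ℝ} (hx : 0 < x) (hν : -1 < ν) (k : ℕ) :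
    term x ν (k + 1) = term x ν k * ((x / 2) ^ 2 / (((k:ℝ) + 1) * ((k : ℝ) + ν + 1))) := by
  have hk1 : 0 < (k : ℝ) + ν + 1 := by
    have : (0:ℝ) ≤ k := Nat.cast_nonneg k
    linarith
  have hg : Real.Gamma (((k:ℝ) + 1) + ν + 1) = ((k:ℝ) + ν + 1) * Real.Gamma ((k:ℝ) + ν + 1) := by
    rw [show ((k:ℝ) + 1) + ν + 1 = ((k:ℝ) + ν + 1) + 1 by ring, Real.Gamma_add_one hk1.ne']
  have hgpos : 0 < Real.Gamma ((k:ℝ) + ν + 1) := Real.Gamma_pos_of_pos hk1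
  have hxp : (0:ℝ) < x / 2 := by linarith
  have hr : (x / 2) ^ (2 * ((k:ℝ) + 1) + ν) = (x / 2) ^ (2 * (k:ℝ) + ν) * (x / 2) ^ 2 := by
    rw [show 2 * ((k:ℝ) + 1) + ν = (2 * (k:ℝ) + ν) + (2:ℕ) by push_cast; ring,
      Real.rpow_add hxp, Real.rpow_natCast]
  have hfac : ((Nat.factorial (k+1) : ℝ)) = ((k:ℝ) + 1) * (Nat.factorial k : ℝ) := by
    rw [Nat.factorial_succ]; push_cast; ring
  unfold term
  push_cast
  rw [hr, hg, hfac]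
  have hfk : (0:ℝ) < (Nat.factorial k : ℝ) := by positivity
  field_simp


lemma summable_term {x ν : ℝ} (hx : 0 < x) (hν : -1 < ν) : Summable (term x ν) := by
  apply summable_of_ratio_norm_eventually_le (r := 1/2) (by norm_num)
  filter_upwards [Filter.eventually_ge_atTop ⌈|ν| + 2 * (x/2)^2 + 1⌉₊] with k hk
  have hk' : |ν| + 2 * (x/2)^2 + 1 ≤ (k : ℝ) := (Nat.le_ceil _).trans (by exact_mod_cast hk)
  have hν1 : -ν ≤ |ν| := neg_le_abs ν
  have hν2 : ν ≤ |ν| := le_abs_self ν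
  have hpos : (0:ℝ) ≤ (x/2)^2 := sq_nonneg _
  have h1 : (0:ℝ) < ((k:ℝ) + 1) * ((k:ℝ) + ν + 1) := by nlinarith
  have h2 : (x / 2) ^ 2 / (((k:ℝ) + 1) * ((k : ℝ) + ν + 1)) ≤ 1/2 := by
    rw [div_le_iff₀ h1]; nlinarith
  rw [Real.norm_of_nonneg (term_pos hx hν _).le, Real.norm_of_nonneg (term_pos hx hν _).le,
    term_succ hx hν]
  calc term x ν k * ((x / 2) ^ 2 / (((k:ℝ) + 1) * ((k : ℝ) + ν + 1)))
      ≤ term x ν k * (1/2) := by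
        exact mul_le_mul_of_nonneg_left h2 (term_pos hx hν k).le
    _ = 1/2 * term x ν k := by ring


lemma Gamma_add_nat {c : ℝ} (hc : 0 < c) (m : ℕ) :
    Real.Gamma (c + m) = (ascPochhammer ℝ m).eval c * Real.Gamma c := by
  induction m with
  | zero => simp
  | succ m ih =>
    have hcm : (0:ℝ) < c + m := by positivity
    rw [show c + ((m:ℕ)+1 : ℕ) = (c + m) + 1 by push_cast; ring,
      Real.Gamma_add_one hcm.ne', ih, ascPochhammer_succ_eval]
    ring

/-- Chu–Vandermonde for falling factorials over ℝ. -/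
lemma desc_vandermonde (n : ℕ) (p q : ℝ) :
    ∑ k ∈ range (n+1), (n.choose k : ℝ) * (descPochhammer ℝ k).eval p *
      (descPochhammer ℝ (n-k)).eval q = (descPochhammer ℝ n).eval (p+q) := by
  induction n with
  | zero => simp
  | succ n ih =>
    set g : ℕ → ℝ := fun k => (n.choose k : ℝ) * (descPochhammer ℝ k).eval p *
      ((descPochhammer ℝ (n-k)).eval q * (q - ((n-k : ℕ) : ℝ))) with hg
    set A : ℕ → ℝ := fun k => (n.choose k : ℝ) * ((descPochhammer ℝ k).eval p * (p - (k:ℝ))) *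
      (descPochhammer ℝ (n-k)).eval q with hA
    have expand : ∀ k ∈ range (n+1),
        (((n+1).choose (k+1) : ℝ)) * (descPochhammer ℝ (k+1)).eval p *
          (descPochhammer ℝ (n+1-(k+1))).eval q = A k + g (k+1) := by
      intro k hk
      have hk' : k ≤ n := Nat.lt_succ_iff.mp (mem_range.mp hk)
      have pascal : ((n+1).choose (k+1) : ℝ) = (n.choose k : ℝ) + (n.choose (k+1) : ℝ) := by
        rw [Nat.choose_succ_succ]; push_cast; ring
      simp only [hA, hg]
      rcases Nat.lt_or_ge k n with h | h
      · rw [pascal, show n+1-(k+1) = (n-(k+1))+1 by omega, show n-k = (n-(k+1)) + 1 by omega,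
          descPochhammer_succ_eval (n-(k+1)), descPochhammer_succ_eval k]
        ring
      · have hkn : k = n := le_antisymm hk' h
        subst hkn
        simp [pascal, descPochhammer_succ_eval]
    rw [Finset.sum_range_succ']
    simp only [Nat.choose_zero_right, Nat.cast_one, descPochhammer_zero, eval_one,
      Nat.sub_zero, one_mul, mul_one]
    rw [Finset.sum_congr rfl expand, Finset.sum_add_distrib]
    have hsumg : ∑ k ∈ range (n+1), g (k+1) = ∑ k ∈ range (n+1), g k - g 0 := by
      rw [Finset.sum_range_succ' g n]
      have : g (n+1) = 0 := by simp [hg, Nat.choose_succ_self]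
      rw [Finset.sum_range_succ, this]
      ring
    rw [hsumg]
    have hg0 : g 0 = (descPochhammer ℝ (n+1)).eval q := by
      simp [hg, descPochhammer_succ_eval]
    have hAg : ∑ k ∈ range (n+1), A k + ∑ k ∈ range (n+1), g k
        = (p + q - n) * ∑ k ∈ range (n+1), (n.choose k : ℝ) * (descPochhammer ℝ k).eval p *
            (descPochhammer ℝ (n-k)).eval q := by
      rw [← Finset.sum_add_distrib, Finset.mul_sum]
      refine Finset.sum_congr rfl fun k hk => ?_
      have hk' : k ≤ n := Nat.lt_succ_iff.mp (mem_range.mp hk)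
      have hc : ((n - k : ℕ) : ℝ) = (n:ℝ) - (k:ℝ) := by
        push_cast [Nat.cast_sub hk']; ring
      simp only [hA, hg]
      rw [hc]
      ring
    rw [hg0, show ∀ a b c : ℝ, a + (b - c) + c = a + b by intros; ring]
    rw [hAg, ih, descPochhammer_succ_eval]
    push_cast
    ring


/-- The antidiagonal reciprocal-Gamma sum appearing in the Cauchy product. -/
noncomputable def W (a b : ℝ) (n : ℕ) : ℝ :=
  ∑ kl ∈ Finset.HasAntidiagonal.antidiagonal n,
    1 / ((Nat.factorial kl.1 : ℝ) * Real.Gamma ((kl.1 : ℝ) + a) *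
      (Nat.factorial kl.2 : ℝ) * Real.Gamma ((kl.2 : ℝ) + b))

lemma W_nonneg {a b : ℝ} (ha : 0 < a) (hb : 0 < b) (n : ℕ) : 0 ≤ W a b n := by
  apply Finset.sum_nonneg
  intro kl _
  have g1 : (0:ℝ) < Real.Gamma ((kl.1 : ℝ) + a) := Real.Gamma_pos_of_pos (by positivity)
  have g2 : (0:ℝ) < Real.Gamma ((kl.2 : ℝ) + b) := Real.Gamma_pos_of_pos (by positivity)
  have f1 : (0:ℝ) < (Nat.factorial kl.1 : ℝ) := by positivity
  have f2 : (0:ℝ) < (Nat.factorial kl.2 : ℝ) := by positivity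
  positivity

lemma W_eq {a b : ℝ} (ha : 0 < a) (hb : 0 < b) (n : ℕ) :
    W a b n * ((Nat.factorial n : ℝ) * Real.Gamma ((n:ℝ) + a) * Real.Gamma ((n:ℝ) + b))
      = (descPochhammer ℝ n).eval (a + b + 2*(n:ℝ) - 2) := by
  rw [W, Finset.Nat.sum_antidiagonal_eq_sum_range_succ
      (fun k l => 1 / ((Nat.factorial k : ℝ) * Real.Gamma ((k : ℝ) + a) *
        (Nat.factorial l : ℝ) * Real.Gamma ((l : ℝ) + b))) n,
    Finset.sum_mul,
    show a + b + 2*(n:ℝ) - 2 = ((n:ℝ) + b - 1) + ((n:ℝ) + a - 1) by ring,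
    ← desc_vandermonde n ((n:ℝ) + b - 1) ((n:ℝ) + a - 1)]
  refine Finset.sum_congr rfl fun k hk => ?_
  have hk' : k ≤ n := Nat.lt_succ_iff.mp (mem_range.mp hk)
  have hcast : ((n - k : ℕ) : ℝ) = (n : ℝ) - (k : ℝ) := by
    push_cast [Nat.cast_sub hk']; ring
  have hka : (0:ℝ) < (k:ℝ) + a := by positivity
  have hkb : (0:ℝ) < ((n - k : ℕ):ℝ) + b := by positivity
  have hGa : Real.Gamma ((n:ℝ) + a)
      = (ascPochhammer ℝ (n-k)).eval ((k:ℝ) + a) * Real.Gamma ((k:ℝ) + a) := by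
    rw [← Gamma_add_nat hka (n-k), hcast]; ring_nf
  have hGb : Real.Gamma ((n:ℝ) + b)
      = (ascPochhammer ℝ k).eval (((n-k : ℕ):ℝ) + b) * Real.Gamma (((n-k:ℕ):ℝ) + b) := by
    rw [← Gamma_add_nat hkb k, hcast]; ring_nf
  have hda : (descPochhammer ℝ (n-k)).eval ((n:ℝ) + a - 1)
      = (ascPochhammer ℝ (n-k)).eval ((k:ℝ) + a) := by
    rw [descPochhammer_eval_eq_ascPochhammer, hcast]; ring_nf
  have hdb : (descPochhammer ℝ k).eval ((n:ℝ) + b - 1)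
      = (ascPochhammer ℝ k).eval (((n-k:ℕ):ℝ) + b) := by
    rw [descPochhammer_eval_eq_ascPochhammer, hcast]; ring_nf
  have hfac : (Nat.factorial n : ℝ) = (n.choose k : ℝ) * (Nat.factorial k : ℝ) *
      (Nat.factorial (n-k) : ℝ) := by
    rw [← Nat.choose_mul_factorial_mul_factorial hk']; push_cast; ring
  have h1 : Real.Gamma ((k:ℝ) + a) ≠ 0 := (Real.Gamma_pos_of_pos hka).ne'
  have h2 : Real.Gamma (((n-k:ℕ):ℝ) + b) ≠ 0 := (Real.Gamma_pos_of_pos hkb).ne'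
  have h3 : (Nat.factorial k : ℝ) ≠ 0 := by positivity
  have h4 : (Nat.factorial (n-k) : ℝ) ≠ 0 := by positivity
  rw [hGa, hGb, hda, hdb, hfac]
  have h2' : Real.Gamma (-(k:ℝ) + (n:ℝ) + b) ≠ 0 := by
    have e : -(k:ℝ) + (n:ℝ) + b = ((n-k:ℕ):ℝ) + b := by rw [hcast]; ring
    rw [e]; exact h2
  have h2'' : Real.Gamma ((n:ℝ) - (k:ℝ) + b) ≠ 0 := by
    have e : (n:ℝ) - (k:ℝ) + b = ((n-k:ℕ):ℝ) + b := by rw [hcast]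
    rw [e]; exact h2
  field_simp


lemma sum_antidiagonal_term {x : ℝ} (hx : 0 < x) (μ ν : ℝ) (hμ : -1 < μ) (hν : -1 < ν) (n : ℕ) :
    ∑ kl ∈ Finset.HasAntidiagonal.antidiagonal n, term x μ kl.1 * term x ν kl.2
      = (x/2) ^ (2*(n:ℝ) + μ + ν) * W (μ+1) (ν+1) n := by
  rw [W, Finset.mul_sum]
  refine Finset.sum_congr rfl fun kl hkl => ?_
  have hsum : kl.1 + kl.2 = n := Finset.HasAntidiagonal.mem_antidiagonal.mp hkl
  have hxp : (0:ℝ) < x / 2 := by linarith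
  have hpow : (x/2) ^ (2*(kl.1:ℝ) + μ) * (x/2) ^ (2*(kl.2:ℝ) + ν)
      = (x/2) ^ (2*(n:ℝ) + μ + ν) := by
    rw [← Real.rpow_add hxp]
    congr 1
    have : ((kl.1 : ℝ) + (kl.2 : ℝ)) = (n : ℝ) := by exact_mod_cast congrArg Nat.cast hsum
    linarith
  have g1 : (0:ℝ) < Real.Gamma ((kl.1 : ℝ) + μ + 1) := Real.Gamma_pos_of_pos (by
    have : (0:ℝ) ≤ kl.1 := Nat.cast_nonneg _
    linarith)
  have g2 : (0:ℝ) < Real.Gamma ((kl.2 : ℝ) + ν + 1) := Real.Gamma_pos_of_pos (by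
    have : (0:ℝ) ≤ kl.2 := Nat.cast_nonneg _
    linarith)
  have f1 : (0:ℝ) < (Nat.factorial kl.1 : ℝ) := by positivity
  have f2 : (0:ℝ) < (Nat.factorial kl.2 : ℝ) := by positivity
  rw [term, term, show (kl.1:ℝ) + (μ+1) = (kl.1:ℝ) + μ + 1 by ring,
    show (kl.2:ℝ) + (ν+1) = (kl.2:ℝ) + ν + 1 by ring, div_mul_div_comm, hpow]
  rw [mul_one_div]
  congr 1
  ring

lemma W_mono {ν : ℝ} (hν : 1 ≤ ν) (n : ℕ) : W ν (ν+2) n ≤ W (ν+1) (ν+1) n := by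
  have hν0 : (0:ℝ) < ν := by linarith
  have h1 := W_eq (a := ν) (b := ν+2) hν0 (by linarith) n
  have h2 := W_eq (a := ν+1) (b := ν+1) (by linarith) (by linarith) n
  set t : ℝ := (n:ℝ) + ν with ht
  have htpos : (0:ℝ) < t := by
    have : (0:ℝ) ≤ n := Nat.cast_nonneg _
    simp only [ht]; linarith
  have hGt : (0:ℝ) < Real.Gamma t := Real.Gamma_pos_of_pos htpos
  have e1 : Real.Gamma ((n:ℝ) + (ν+1)) = t * Real.Gamma t := by
    rw [show (n:ℝ) + (ν+1) = t + 1 by rw [ht]; ring, Real.Gamma_add_one htpos.ne']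
  have e2 : Real.Gamma ((n:ℝ) + (ν+2)) = (t+1) * (t * Real.Gamma t) := by
    rw [show (n:ℝ) + (ν+2) = (t+1) + 1 by rw [ht]; ring, Real.Gamma_add_one (by linarith),
      show t + 1 = t + 1 from rfl, Real.Gamma_add_one htpos.ne']
  have e3 : ν + (ν + 2) + 2*(n:ℝ) - 2 = (ν+1) + (ν+1) + 2*(n:ℝ) - 2 := by ring
  rw [e2, e3] at h1
  rw [e1] at h2
  -- h1 : W ν (ν+2) n * (n! * Γ t * ((t+1)*(t*Γ t))) = desc
  -- h2 : W (ν+1) (ν+1) n * (n! * (t*Γ t) * (t*Γ t)) = desc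
  have key : W ν (ν+2) n * (t + 1) = W (ν+1) (ν+1) n * t := by
    have hfn : (0:ℝ) < (Nat.factorial n : ℝ) := by positivity
    have hD : ((Nat.factorial n : ℝ) * (Real.Gamma t * (t * Real.Gamma t))) ≠ 0 := by positivity
    have := h1.trans h2.symm
    apply mul_right_cancel₀ hD
    nlinarith [this]
  have hW1 : 0 ≤ W ν (ν+2) n := W_nonneg hν0 (by linarith) n
  nlinarith [key, hW1, htpos]


lemma turan {x ν : ℝ} (hx : 0 < x) (hν : 1 ≤ ν) :
    (∑' k, term x (ν-1) k) * (∑' k, term x (ν+1) k)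
      ≤ (∑' k, term x ν k) * (∑' k, term x ν k) := by
  have hm1 : (-1:ℝ) < ν - 1 := by linarith
  have hν0 : (-1:ℝ) < ν := by linarith
  have hp1 : (-1:ℝ) < ν + 1 := by linarith
  have s1 := summable_term hx hm1
  have s2 := summable_term hx hν0
  have s3 := summable_term hx hp1
  have pair1 : Summable (fun p : ℕ × ℕ => term x (ν-1) p.1 * term x (ν+1) p.2) :=
    s1.mul_of_nonneg s3 (fun k => (term_pos hx hm1 k).le) (fun k => (term_pos hx hp1 k).le)
  have pair2 : Summable (fun p : ℕ × ℕ => term x ν p.1 * term x ν p.2) :=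
    s2.mul_of_nonneg s2 (fun k => (term_pos hx hν0 k).le) (fun k => (term_pos hx hν0 k).le)
  rw [Summable.tsum_mul_tsum_eq_tsum_sum_antidiagonal s1 s3 pair1,
    Summable.tsum_mul_tsum_eq_tsum_sum_antidiagonal s2 s2 pair2]
  refine Summable.tsum_le_tsum (h := fun n => ?_)
    (summable_sum_mul_antidiagonal_of_summable_mul pair1)
    (summable_sum_mul_antidiagonal_of_summable_mul pair2)
  rw [sum_antidiagonal_term hx (ν-1) (ν+1) hm1 hp1 n,
    sum_antidiagonal_term hx ν ν hν0 hν0 n,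
    show 2*(n:ℝ) + (ν-1) + (ν+1) = 2*(n:ℝ) + ν + ν by ring,
    show ν - 1 + 1 = ν by ring, show ν + 1 + 1 = ν + 2 by ring]
  exact mul_le_mul_of_nonneg_left (W_mono hν n) (Real.rpow_nonneg (by linarith) _)

lemma recurrence {x ν : ℝ} (hx : 0 < x) (hν : 1 ≤ ν) :
    x * (∑' k, term x (ν-1) k)
      = 2*ν*(∑' k, term x ν k) + x*(∑' k, term x (ν+1) k) := by
  have hm1 : (-1:ℝ) < ν - 1 := by linarith
  have hν0 : (-1:ℝ) < ν := by linarith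
  have hp1 : (-1:ℝ) < ν + 1 := by linarith
  have hxp : (0:ℝ) < x / 2 := by linarith
  have hνne : ν ≠ 0 := by linarith
  set f : ℕ → ℝ := fun k => x * term x (ν-1) k - 2*ν * term x ν k with hf
  have hfs : Summable f := ((summable_term hx hm1).mul_left x).sub
    ((summable_term hx hν0).mul_left (2*ν))
  have hf0 : f 0 = 0 := by
    simp only [hf]
    rw [term, term,
      show (2*((0:ℕ):ℝ) + (ν-1)) = ν-1 by push_cast; ring,
      show (((0:ℕ):ℝ) + (ν-1) + 1) = (ν-1) + 1 by push_cast; ring,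
      show (2*((0:ℕ):ℝ) + ν) = (ν-1) + 1 by push_cast; ring,
      show (((0:ℕ):ℝ) + ν + 1) = ((ν-1) + 1) + 1 by push_cast; ring,
      Real.rpow_add hxp, Real.rpow_one, Real.Gamma_add_one (by linarith : (ν-1)+1 ≠ 0)]
    have hG : Real.Gamma ((ν-1)+1) ≠ 0 := (Real.Gamma_pos_of_pos (by linarith)).ne'
    have hP : (x/2) ^ (ν-1) ≠ 0 := (Real.rpow_pos_of_pos hxp _).ne'
    rw [Nat.factorial_zero]
    push_cast
    field_simp
    linear_combination (-(x * (x / 2) ^ (ν - 1))) * mul_inv_cancel₀ hνne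
  have hfsucc : ∀ k : ℕ, f (k+1) = x * term x (ν+1) k := by
    intro k
    have hk1 : (0:ℝ) < (k:ℝ) + ν + 1 := by
      have : (0:ℝ) ≤ k := Nat.cast_nonneg _
      linarith
    have hG : (0:ℝ) < Real.Gamma ((k:ℝ)+ν+1) := Real.Gamma_pos_of_pos hk1
    simp only [hf]
    rw [term, term, term,
      show (2*(((k+1:ℕ)):ℝ) + (ν-1)) = 2*(k:ℝ)+ν+1 by push_cast; ring,
      show ((((k+1:ℕ)):ℝ) + (ν-1) + 1) = (k:ℝ)+ν+1 by push_cast; ring,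
      show (2*(((k+1:ℕ)):ℝ) + ν) = (2*(k:ℝ)+ν+1) + 1 by push_cast; ring,
      show ((((k+1:ℕ)):ℝ) + ν + 1) = ((k:ℝ)+ν+1) + 1 by push_cast; ring,
      show (2*((k:ℕ):ℝ) + (ν+1)) = 2*(k:ℝ)+ν+1 by push_cast; ring,
      show (((k:ℕ):ℝ) + (ν+1) + 1) = ((k:ℝ)+ν+1) + 1 by push_cast; ring,
      show (x/2) ^ ((2*(k:ℝ)+ν+1) + 1) = (x/2) ^ (2*(k:ℝ)+ν+1) * (x/2) by
        rw [Real.rpow_add hxp, Real.rpow_one],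
      Real.Gamma_add_one hk1.ne', Nat.factorial_succ]
    have hP : (x/2) ^ (2*(k:ℝ)+ν+1) ≠ 0 := (Real.rpow_pos_of_pos hxp _).ne'
    have hF : ((Nat.factorial k : ℕ) : ℝ) ≠ 0 := by positivity
    push_cast
    field_simp
    ring
  have key : ∑' k, f k = x * ∑' k, term x (ν+1) k := by
    rw [Summable.tsum_eq_zero_add hfs, hf0, zero_add]
    simp_rw [hfsucc]
    rw [tsum_mul_left]
  have expand : ∑' k, f k = x * (∑' k, term x (ν-1) k) - 2*ν*(∑' k, term x ν k) := by
    simp only [hf]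
    rw [Summable.tsum_sub ((summable_term hx hm1).mul_left x) ((summable_term hx hν0).mul_left (2*ν)),
      tsum_mul_left, tsum_mul_left]
  linarith [key, expand]


end BesselAux

theorem besselI_ratio_lower_bound (x ν : ℝ) (hx : 0 < x) (hν : 1 ≤ ν) :
    besselI (ν - 1) x * ((Real.sqrt (x ^ 2 + ν ^ 2) - ν) / x) ≤ besselI ν x := by
  have hm1 : (-1:ℝ) < ν - 1 := by linarith
  have hν0 : (-1:ℝ) < ν := by linarith
  have hp1 : (-1:ℝ) < ν + 1 := by linarith
  have hbI : ∀ μ : ℝ, besselI μ x = ∑' k, BesselAux.term x μ k := fun μ => rfl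
  rw [hbI, hbI]
  set b := ∑' k, BesselAux.term x (ν-1) k with hbdef
  set q := ∑' k, BesselAux.term x ν k with hqdef
  set c := ∑' k, BesselAux.term x (ν+1) k with hcdef
  have hb : 0 < b := lt_of_lt_of_le (BesselAux.term_pos hx hm1 0)
    (Summable.le_tsum (BesselAux.summable_term hx hm1) 0
      (fun j _ => (BesselAux.term_pos hx hm1 j).le))
  have hq : 0 < q := lt_of_lt_of_le (BesselAux.term_pos hx hν0 0)
    (Summable.le_tsum (BesselAux.summable_term hx hν0) 0
      (fun j _ => (BesselAux.term_pos hx hν0 j).le))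
  have hc : 0 ≤ c := tsum_nonneg (fun k => (BesselAux.term_pos hx hp1 k).le)
  have htur : b * c ≤ q * q := BesselAux.turan hx hν
  have hrec : x * b = 2*ν*q + x*c := BesselAux.recurrence hx hν
  have key : x * b^2 ≤ x * q^2 + 2*ν*b*q := by nlinarith [mul_le_mul_of_nonneg_left htur hx.le]
  set s := Real.sqrt (x^2 + ν^2) with hsdef
  have hs : 0 ≤ s := Real.sqrt_nonneg _
  have hs2 : s^2 = x^2 + ν^2 := Real.sq_sqrt (by positivity)
  rw [mul_div_assoc' b (s - ν) x, div_le_iff₀ hx]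
  have hA : 0 < q*x + b*ν + b*s := by
    have h1 : 0 < q*x := mul_pos hq hx
    have h2 : 0 < b*ν := mul_pos hb (by linarith)
    have h3 : 0 ≤ b*s := mul_nonneg hb.le hs
    linarith
  have keyx : x*x*(b*b) ≤ x*x*(q*q) + 2*ν*b*q*x := by nlinarith [key, hx]
  nlinarith [keyx, hA, hs2, mul_pos hb hb, mul_pos hq hx]
end

section
/- For every natural number ν ≥ 1 and every real x > 0, the sum ∑_{k=1}^{ν} ln(√(x² + k²) + k) is at most √(1 + x²) - √(x² + ν²) + (ν + 1/2)·ln(√(x² + ν²) + ν) - (1/2)·ln(1 + √(1 + x²)) + 1. -/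
open Real intervalIntegral

namespace SLSB

variable {x : ℝ}

noncomputable def g (x t : ℝ) : ℝ := Real.sqrt (x ^ 2 + t ^ 2) + t
noncomputable def f (x t : ℝ) : ℝ := Real.log (g x t)
noncomputable def F (x t : ℝ) : ℝ := t * Real.log (g x t) - Real.sqrt (x ^ 2 + t ^ 2)

lemma s_pos (hx : 0 < x) (t : ℝ) : 0 < Real.sqrt (x ^ 2 + t ^ 2) :=
  Real.sqrt_pos.2 (by positivity)

lemma g_pos (hx : 0 < x) (t : ℝ) : 0 < g x t := by
  have h1 : |t| < Real.sqrt (x ^ 2 + t ^ 2) := by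
    rw [← Real.sqrt_sq_eq_abs]
    exact Real.sqrt_lt_sqrt (by positivity) (by nlinarith)
  have := neg_abs_le t
  unfold g; linarith

lemma hasDerivAt_s (hx : 0 < x) (t : ℝ) :
    HasDerivAt (fun u => Real.sqrt (x ^ 2 + u ^ 2)) (t / Real.sqrt (x ^ 2 + t ^ 2)) t := by
  have h : HasDerivAt (fun u : ℝ => x ^ 2 + u ^ 2) (2 * t) t := by
    simpa using (hasDerivAt_pow 2 t).const_add (x ^ 2)
  have := h.sqrt (by positivity)
  convert this using 1
  have hs := s_pos hx t
  field_simp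

lemma hasDerivAt_f (hx : 0 < x) (t : ℝ) :
    HasDerivAt (f x) (1 / Real.sqrt (x ^ 2 + t ^ 2)) t := by
  have hg : HasDerivAt (g x) (t / Real.sqrt (x ^ 2 + t ^ 2) + 1) t :=
    (hasDerivAt_s hx t).add (hasDerivAt_id t)
  have := hg.log (g_pos hx t).ne'
  convert this using 1
  · rfl
  have hs := s_pos hx t
  have hgp := g_pos hx t
  unfold g at hgp ⊢
  field_simp
  ring

lemma hasDerivAt_F (hx : 0 < x) (t : ℝ) : HasDerivAt (F x) (f x t) t := by
  have h1 : HasDerivAt (fun u => u * Real.log (g x u))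
      (1 * Real.log (g x t) + t * (1 / Real.sqrt (x ^ 2 + t ^ 2))) t :=
    (hasDerivAt_id t).mul (hasDerivAt_f hx t)
  have h2 := h1.sub (hasDerivAt_s hx t)
  have hs := (s_pos hx t).ne'
  refine HasDerivAt.congr_deriv (f := F x) h2 ?_
  unfold f
  field_simp
  ring

lemma continuous_f (hx : 0 < x) : Continuous (f x) := by
  have hg : Continuous (g x) := ((continuous_const.add (continuous_pow 2)).sqrt).add continuous_id
  exact hg.log fun t => (g_pos hx t).ne'

lemma concave_f (hx : 0 < x) : ConcaveOn ℝ (Set.Ici (0 : ℝ)) (f x) := by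
  apply AntitoneOn.concaveOn_of_deriv (convex_Ici 0) (continuous_f hx).continuousOn
  · exact fun t _ => ((hasDerivAt_f hx t).differentiableAt).differentiableWithinAt
  · intro a ha b hb hab
    rw [interior_Ici] at ha hb
    rw [(hasDerivAt_f hx a).deriv, (hasDerivAt_f hx b).deriv]
    apply one_div_le_one_div_of_le (s_pos hx a)
    exact Real.sqrt_le_sqrt (by nlinarith [Set.mem_Ioi.1 ha, Set.mem_Ioi.1 hb])

/-- Trapezoid inequality. -/
lemma trapezoid (hx : 0 < x) {a : ℝ} (ha : 0 ≤ a) :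
    (f x a + f x (a + 1)) / 2 ≤ F x (a + 1) - F x a := by
  have hle : a ≤ a + 1 := by linarith
  have hFTC : ∫ t in a..(a + 1), f x t = F x (a + 1) - F x a := by
    apply intervalIntegral.integral_eq_sub_of_hasDerivAt
    · exact fun t _ => hasDerivAt_F hx t
    · exact (continuous_f hx).intervalIntegrable _ _
  rw [← hFTC]
  have hchord : ∀ t ∈ Set.Icc a (a + 1),
      f x a + (t - a) * (f x (a + 1) - f x a) ≤ f x t := by
    intro t ht
    obtain ⟨h1, h2⟩ := ht
    have hconc := (concave_f hx).2 (Set.mem_Ici.2 ha) (Set.mem_Ici.2 (by linarith : (0:ℝ) ≤ a + 1))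
      (show (0:ℝ) ≤ a + 1 - t by linarith) (show (0:ℝ) ≤ t - a by linarith)
      (show (a + 1 - t) + (t - a) = 1 by ring)
    have heq : (a + 1 - t) • a + (t - a) • (a + 1) = t := by simp [smul_eq_mul]; ring
    rw [heq] at hconc
    simp only [smul_eq_mul] at hconc
    nlinarith
  have hmono : ∫ t in a..(a + 1), (f x a + (t - a) * (f x (a + 1) - f x a)) ≤
      ∫ t in a..(a + 1), f x t := by
    apply intervalIntegral.integral_mono_on hle _ ((continuous_f hx).intervalIntegrable _ _) hchord
    apply Continuous.intervalIntegrable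
    continuity
  refine le_trans (le_of_eq ?_) hmono
  have : ∫ t in a..(a + 1), (f x a + (t - a) * (f x (a + 1) - f x a)) =
      f x a + (f x (a + 1) - f x a) / 2 := by
    rw [intervalIntegral.integral_add (by apply Continuous.intervalIntegrable; continuity)
      (by apply Continuous.intervalIntegrable; continuity)]
    simp only [intervalIntegral.integral_const]
    rw [intervalIntegral.integral_mul_const, intervalIntegral.integral_sub
      (by apply Continuous.intervalIntegrable; continuity)
      (by apply Continuous.intervalIntegrable; continuity)]
    simp [integral_id]
    ring
  rw [this]; ring

end SLSB

theorem sum_log_sqrt_bound (ν : ℕ) (hν : 1 ≤ ν) (x : ℝ) (hx : 0 < x) :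
    ∑ k ∈ Finset.Icc 1 ν, Real.log (Real.sqrt (x ^ 2 + (k : ℝ) ^ 2) + (k : ℝ)) ≤
      Real.sqrt (1 + x ^ 2) - Real.sqrt (x ^ 2 + (ν : ℝ) ^ 2)
        + ((ν : ℝ) + 1/2) * Real.log (Real.sqrt (x ^ 2 + (ν : ℝ) ^ 2) + (ν : ℝ))
        - (1/2) * Real.log (1 + Real.sqrt (1 + x ^ 2)) + 1 := by
  induction ν with
  | zero => omega
  | succ n ih =>
    rcases Nat.eq_or_lt_of_le hν with h1 | h1
    · -- n + 1 = 1, i.e. n = 0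
      have hn : n = 0 := by omega
      subst hn
      norm_num
      rw [show (1 : ℝ) + x ^ 2 = x ^ 2 + 1 by ring,
        show Real.log (1 + Real.sqrt (x ^ 2 + 1)) = Real.log (Real.sqrt (x ^ 2 + 1) + 1) by
          rw [add_comm]]
      linarith
    · have hn : 1 ≤ n := by omega
      have ihn := ih hn
      rw [Finset.sum_Icc_succ_top (by omega : 1 ≤ n + 1)]
      have htrap := SLSB.trapezoid hx (show (0:ℝ) ≤ (n : ℝ) by positivity)
      push_cast
      simp only [SLSB.f, SLSB.F, SLSB.g] at htrap
      push_cast at ihn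
      nlinarith [htrap, ihn]
end

section
/- There exists a universal constant c > 0 such that for all real x > 1 and all real ν ≥ 0, the modified Bessel function of the first kind satisfies I_ν(x) ≥ c · ((√(x² + ν²) - ν)/x)^{ν + 1/2} · e^{√(x² + ν²)} / √x. -/
open Real
set_option maxHeartbeats 2000000

lemma factorial_stirling (m : ℕ) :
    (Nat.factorial m : ℝ) ≤ Real.exp 1 * Real.sqrt (m + 1) * ((m : ℝ) / Real.exp 1) ^ m := by
  match m with
  | 0 =>
    simp only [Nat.factorial_zero, Nat.cast_zero, Nat.cast_one, pow_zero, mul_one, zero_add,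
      Real.sqrt_one]
    nlinarith [Real.exp_one_gt_d9]
  | (n+1) =>
    have h1 : Stirling.stirlingSeq (n + 1) ≤ Stirling.stirlingSeq 1 := by
      have := Stirling.stirlingSeq'_antitone (Nat.zero_le n)
      simpa using this
    rw [Stirling.stirlingSeq_one, Stirling.stirlingSeq] at h1
    push_cast at h1
    have hd : (0:ℝ) < Real.sqrt (2 * ((n:ℝ)+1)) * (((n:ℝ)+1) / Real.exp 1) ^ (n+1) := by
      positivity
    rw [div_le_iff₀ hd] at h1
    push_cast
    calc (Nat.factorial (n+1) : ℝ)
        ≤ Real.exp 1 / Real.sqrt 2 *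
          (Real.sqrt (2 * ((n:ℝ)+1)) * (((n:ℝ)+1) / Real.exp 1) ^ (n+1)) := by
          exact_mod_cast h1
      _ = Real.exp 1 * Real.sqrt ((n:ℝ)+1) * (((n:ℝ)+1) / Real.exp 1) ^ (n+1) := by
          rw [Real.sqrt_mul (by norm_num : (0:ℝ) ≤ 2)]
          have h2 : Real.sqrt 2 > 0 := by positivity
          field_simp
      _ ≤ Real.exp 1 * Real.sqrt (((n:ℝ)+1) + 1) * (((n:ℝ)+1) / Real.exp 1) ^ (n+1) := by
          have h3 : Real.sqrt ((n:ℝ)+1) ≤ Real.sqrt (((n:ℝ)+1)+1) :=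
            Real.sqrt_le_sqrt (by linarith)
          exact mul_le_mul_of_nonneg_right
            (mul_le_mul_of_nonneg_left h3 (Real.exp_pos 1).le) (by positivity)

lemma gamma_interp {t : ℝ} (ht : 0 ≤ t) :
    Real.Gamma (t+1) ≤ (Nat.factorial ⌊t⌋₊ : ℝ) * ((⌊t⌋₊ : ℝ) + 1) ^ (t - (⌊t⌋₊ : ℝ)) := by
  set m := ⌊t⌋₊ with hm
  set θ := t - (m : ℝ) with hθ
  have hθ0 : 0 ≤ θ := by
    have := Nat.floor_le ht
    simp only [hθ]; linarith
  have hθ1 : θ ≤ 1 := by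
    have := (Nat.lt_floor_add_one t).le
    simp only [hθ]; linarith
  have hcv := Real.convexOn_log_Gamma
  have key := hcv.2 (show ((m:ℝ)+1) ∈ Set.Ioi (0:ℝ) by simp; positivity)
    (show ((m:ℝ)+2) ∈ Set.Ioi (0:ℝ) by simp; positivity)
    (by linarith : (0:ℝ) ≤ 1 - θ) hθ0 (by ring)
  have harg : (1-θ) • ((m:ℝ)+1) + θ • ((m:ℝ)+2) = t + 1 := by
    simp only [smul_eq_mul]; ring
  rw [harg] at key
  simp only [Function.comp_apply] at key
  have hA : (0:ℝ) < Real.Gamma ((m:ℝ)+1) := Real.Gamma_pos_of_pos (by positivity)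
  have hB : (0:ℝ) < Real.Gamma ((m:ℝ)+2) := Real.Gamma_pos_of_pos (by positivity)
  have hT : (0:ℝ) < Real.Gamma (t+1) := Real.Gamma_pos_of_pos (by linarith)
  have h2 : Real.Gamma (t+1) ≤
      Real.Gamma ((m:ℝ)+1) ^ (1-θ) * Real.Gamma ((m:ℝ)+2) ^ θ := by
    calc Real.Gamma (t+1) = Real.exp (Real.log (Real.Gamma (t+1))) := (Real.exp_log hT).symm
      _ ≤ Real.exp ((1-θ) * Real.log (Real.Gamma ((m:ℝ)+1))
            + θ * Real.log (Real.Gamma ((m:ℝ)+2))) := Real.exp_le_exp.mpr key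
      _ = _ := by
        rw [Real.exp_add, Real.rpow_def_of_pos hA, Real.rpow_def_of_pos hB,
          mul_comm (Real.log _), mul_comm (Real.log _)]
  have hGA : Real.Gamma ((m:ℝ)+1) = (Nat.factorial m : ℝ) := Real.Gamma_nat_eq_factorial m
  have hGB : Real.Gamma ((m:ℝ)+2) = (Nat.factorial (m+1) : ℝ) := by
    have := Real.Gamma_nat_eq_factorial (m+1)
    push_cast at this ⊢
    rw [show (m:ℝ)+2 = (m:ℝ)+1+1 by ring, this]
  rw [hGA, hGB] at h2
  refine h2.trans (le_of_eq ?_)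
  have hfac : (Nat.factorial (m+1) : ℝ) = ((m:ℝ)+1) * (Nat.factorial m : ℝ) := by
    push_cast [Nat.factorial_succ]; ring
  rw [hfac, Real.mul_rpow (by positivity) (by positivity)]
  have hfp : (0:ℝ) < (Nat.factorial m : ℝ) := by positivity
  calc (Nat.factorial m : ℝ) ^ (1-θ) * (((m:ℝ)+1) ^ θ * (Nat.factorial m : ℝ) ^ θ)
      = ((Nat.factorial m : ℝ) ^ (1-θ) * (Nat.factorial m : ℝ) ^ θ) * ((m:ℝ)+1) ^ θ := by
        ring
    _ = (Nat.factorial m : ℝ) * ((m:ℝ)+1) ^ θ := by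
        rw [← Real.rpow_add hfp]
        norm_num

lemma gamma_stirling {t : ℝ} (ht : 0 ≤ t) :
    Real.Gamma (t+1) ≤ Real.exp 3 * Real.sqrt (t+1) * (t / Real.exp 1) ^ t := by
  set m := ⌊t⌋₊ with hm
  set θ := t - (m : ℝ) with hθ
  have hmt : (m : ℝ) ≤ t := Nat.floor_le ht
  have hθ0 : 0 ≤ θ := by simp only [hθ]; linarith
  have hθ1 : θ ≤ 1 := by
    have := (Nat.lt_floor_add_one t).le
    simp only [hθ]; linarith
  have hePos := Real.exp_pos 1
  have key : ((m:ℝ) / Real.exp 1) ^ m * ((m:ℝ) + 1) ^ θ ≤ Real.exp 2 * (t / Real.exp 1) ^ t := by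
    rcases Nat.eq_zero_or_pos m with h0 | hpos
    · have ht1 : t < 1 := Nat.floor_eq_zero.mp (hm.symm.trans h0)
      simp only [h0, Nat.cast_zero, pow_zero, zero_add, Real.one_rpow, one_mul]
      rcases eq_or_lt_of_le ht with h | h
      · rw [← h]
        simp only [zero_div, Real.rpow_zero, mul_one]
        nlinarith [Real.add_one_le_exp (2:ℝ)]
      · have htpos : 0 < t / Real.exp 1 := by positivity
        rw [Real.rpow_def_of_pos htpos, Real.log_div h.ne' (Real.exp_pos 1).ne',
          Real.log_exp]
        have hlog : t - 1 ≤ t * Real.log t := by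
          have h1 := Real.log_le_sub_one_of_pos (show (0:ℝ) < t⁻¹ by positivity)
          rw [Real.log_inv] at h1
          have h2 : t * (1 - t⁻¹) ≤ t * Real.log t :=
            mul_le_mul_of_nonneg_left (by linarith) h.le
          have h3 : t * (1 - t⁻¹) = t - 1 := by field_simp
          linarith
        calc (1:ℝ) = Real.exp 0 := Real.exp_zero.symm
          _ ≤ Real.exp (2 + (Real.log t - 1) * t) := by
              apply Real.exp_le_exp.mpr
              nlinarith
          _ = Real.exp 2 * Real.exp ((Real.log t - 1) * t) := Real.exp_add _ _
    · have hm1 : (1:ℝ) ≤ (m:ℝ) := by exact_mod_cast hpos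
      have htpos : (0:ℝ) < t := by linarith
      have h1 : ((m:ℝ) / Real.exp 1) ^ m ≤ (t / Real.exp 1) ^ m := by
        have : (m:ℝ) / Real.exp 1 ≤ t / Real.exp 1 := by gcongr
        exact pow_le_pow_left₀ (by positivity) this m
      have h2 : ((m:ℝ) + 1) ^ θ ≤ 2 * t ^ θ := by
        have hle : (m:ℝ) + 1 ≤ 2 * t := by linarith
        have htp := Real.rpow_pos_of_pos htpos θ
        calc ((m:ℝ) + 1) ^ θ ≤ (2 * t) ^ θ :=
              Real.rpow_le_rpow (by positivity) hle hθ0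
          _ = 2 ^ θ * t ^ θ := Real.mul_rpow (by norm_num) htpos.le
          _ ≤ 2 * t ^ θ := by
              have h21 : (2:ℝ) ^ θ ≤ 2 ^ (1:ℝ) :=
                Real.rpow_le_rpow_of_exponent_le (by norm_num) hθ1
              rw [Real.rpow_one] at h21
              nlinarith
      have hsplit : (t / Real.exp 1) ^ t = (t / Real.exp 1) ^ m * (t / Real.exp 1) ^ θ := by
        have harg : t = (m:ℝ) + θ := by simp only [hθ]; ring
        have h4 : (t / Real.exp 1) ^ t = (t / Real.exp 1) ^ ((m:ℝ) + θ) := by rw [← harg]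
        rw [h4, Real.rpow_add (by positivity), Real.rpow_natCast]
      have h3 : 2 * t ^ θ ≤ Real.exp 2 * (t / Real.exp 1) ^ θ := by
        rw [Real.div_rpow htpos.le hePos.le, Real.exp_one_rpow]
        have he : Real.exp θ ≤ Real.exp 1 := Real.exp_le_exp.mpr hθ1
        have he2 : 2 * Real.exp θ ≤ Real.exp 2 := by
          rw [show (2:ℝ) = 1 + 1 by norm_num, Real.exp_add]
          nlinarith [Real.add_one_le_exp (1:ℝ), Real.exp_pos θ]
        have htp := Real.rpow_pos_of_pos htpos θ
        have hexpθ := Real.exp_pos θ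
        have hkey : Real.exp 2 * (t ^ θ / Real.exp θ) - 2 * t ^ θ
            = (Real.exp 2 - 2 * Real.exp θ) * (t ^ θ / Real.exp θ) := by
          field_simp
        nlinarith [mul_nonneg (sub_nonneg.mpr he2) (div_pos htp hexpθ).le]
      calc ((m:ℝ) / Real.exp 1) ^ m * ((m:ℝ) + 1) ^ θ
          ≤ (t / Real.exp 1) ^ m * (2 * t ^ θ) := by
            apply mul_le_mul h1 h2 (by positivity) (by positivity)
        _ ≤ (t / Real.exp 1) ^ m * (Real.exp 2 * (t / Real.exp 1) ^ θ) :=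
            mul_le_mul_of_nonneg_left h3 (by positivity)
        _ = Real.exp 2 * (t / Real.exp 1) ^ t := by rw [hsplit]; ring
  calc Real.Gamma (t+1) ≤ (Nat.factorial m : ℝ) * ((m:ℝ) + 1) ^ θ := gamma_interp ht
    _ ≤ (Real.exp 1 * Real.sqrt ((m:ℝ)+1) * ((m:ℝ) / Real.exp 1) ^ m) * ((m:ℝ) + 1) ^ θ :=
        mul_le_mul_of_nonneg_right (factorial_stirling m) (by positivity)
    _ ≤ (Real.exp 1 * Real.sqrt (t+1) * ((m:ℝ) / Real.exp 1) ^ m) * ((m:ℝ) + 1) ^ θ := by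
        have hs : Real.sqrt ((m:ℝ)+1) ≤ Real.sqrt (t+1) := Real.sqrt_le_sqrt (by linarith)
        apply mul_le_mul_of_nonneg_right _ (by positivity)
        apply mul_le_mul_of_nonneg_right _ (by positivity)
        exact mul_le_mul_of_nonneg_left hs (Real.exp_pos 1).le
    _ = (Real.exp 1 * Real.sqrt (t+1)) * (((m:ℝ) / Real.exp 1) ^ m * ((m:ℝ) + 1) ^ θ) := by
        ring
    _ ≤ (Real.exp 1 * Real.sqrt (t+1)) * (Real.exp 2 * (t / Real.exp 1) ^ t) :=
        mul_le_mul_of_nonneg_left key (by positivity)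
    _ = Real.exp 3 * Real.sqrt (t+1) * (t / Real.exp 1) ^ t := by
        rw [show (3:ℝ) = 1 + 2 by norm_num, Real.exp_add]; ring

lemma gamma_factorial_le {ν : ℝ} (hν : 0 ≤ ν) (k : ℕ) :
    (Nat.factorial k : ℝ) * Real.Gamma (ν + 1) ≤ Real.Gamma ((k:ℝ) + ν + 1) := by
  induction k with
  | zero => simp
  | succ n ih =>
    have harg : ((n:ℝ) + 1) + ν + 1 = ((n:ℝ) + ν + 1) + 1 := by ring
    have hpos : (0:ℝ) < (n:ℝ) + ν + 1 := by positivity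
    have hGpos : 0 < Real.Gamma ((n:ℝ) + ν + 1) := Real.Gamma_pos_of_pos hpos
    rw [Nat.factorial_succ]
    push_cast
    rw [harg, Real.Gamma_add_one hpos.ne']
    calc ((n:ℝ) + 1) * (Nat.factorial n : ℝ) * Real.Gamma (ν + 1)
        ≤ ((n:ℝ) + 1) * Real.Gamma ((n:ℝ) + ν + 1) := by
          rw [mul_assoc]
          exact mul_le_mul_of_nonneg_left ih (by positivity)
      _ ≤ ((n:ℝ) + ν + 1) * Real.Gamma ((n:ℝ) + ν + 1) :=
          mul_le_mul_of_nonneg_right (by linarith) hGpos.le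

lemma besselI_term_pos {ν x : ℝ} (hν : 0 ≤ ν) (hx : 0 < x) (k : ℕ) :
    0 < (x / 2) ^ (2 * (k : ℝ) + ν) / ((Nat.factorial k : ℝ) * Real.Gamma ((k : ℝ) + ν + 1)) := by
  have h1 : (0:ℝ) < (x/2) ^ (2 * (k : ℝ) + ν) := Real.rpow_pos_of_pos (by positivity) _
  have h2 : (0:ℝ) < Real.Gamma ((k : ℝ) + ν + 1) := Real.Gamma_pos_of_pos (by positivity)
  have h3 : (0:ℝ) < (Nat.factorial k : ℝ) := by positivity
  positivity

lemma besselI_summable {ν x : ℝ} (hν : 0 ≤ ν) (hx : 0 < x) :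
    Summable (fun k : ℕ =>
      (x / 2) ^ (2 * (k : ℝ) + ν) / ((Nat.factorial k : ℝ) * Real.Gamma ((k : ℝ) + ν + 1))) := by
  have hy : (0:ℝ) < x/2 := by positivity
  have hGν : 0 < Real.Gamma (ν + 1) := Real.Gamma_pos_of_pos (by positivity)
  refine Summable.of_nonneg_of_le
    (f := fun k : ℕ => ((x/2) ^ ν / Real.Gamma (ν+1)) * (((x/2)^2) ^ k / (Nat.factorial k : ℝ)))
    (fun k => (besselI_term_pos hν hx k).le) ?_ ?_
  · intro k
    have hnum : (x / 2) ^ (2 * (k : ℝ) + ν) = ((x/2)^2) ^ k * (x/2) ^ ν := by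
      rw [Real.rpow_add hy, show (2 * (k:ℝ)) = ((2 * k : ℕ) : ℝ) by push_cast; ring,
        Real.rpow_natCast, pow_mul]
    have hfac1 : (1:ℝ) ≤ (Nat.factorial k : ℝ) := by
      exact_mod_cast Nat.one_le_iff_ne_zero.mpr (Nat.factorial_ne_zero k)
    have hG : (Nat.factorial k : ℝ) * Real.Gamma (ν + 1)
        ≤ Real.Gamma ((k:ℝ) + ν + 1) := gamma_factorial_le hν k
    have hGpos : 0 < Real.Gamma ((k:ℝ) + ν + 1) := Real.Gamma_pos_of_pos (by positivity)
    rw [hnum]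
    have hle : (Nat.factorial k : ℝ) * Real.Gamma (ν + 1)
        ≤ (Nat.factorial k : ℝ) * Real.Gamma ((k:ℝ) + ν + 1) := by
      calc (Nat.factorial k : ℝ) * Real.Gamma (ν + 1)
          ≤ Real.Gamma ((k:ℝ) + ν + 1) := hG
        _ ≤ (Nat.factorial k : ℝ) * Real.Gamma ((k:ℝ) + ν + 1) := by
            nlinarith
    calc ((x/2)^2) ^ k * (x/2) ^ ν / ((Nat.factorial k : ℝ) * Real.Gamma ((k:ℝ) + ν + 1))
        ≤ ((x/2)^2) ^ k * (x/2) ^ ν / ((Nat.factorial k : ℝ) * Real.Gamma (ν + 1)) := by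
          gcongr
      _ = ((x/2) ^ ν / Real.Gamma (ν+1)) * (((x/2)^2) ^ k / (Nat.factorial k : ℝ)) := by
          field_simp
  · exact (Real.summable_pow_div_factorial ((x/2)^2)).mul_left _

-- core: k^k (k+ν)^(k+ν) ≤ exp(2+2δ) a^k (a+ν)^(k+ν) when δ = k - a, δ² ≤ a
lemma core_ineq {a ν : ℝ} (ha : 0 < a) (hν : 0 ≤ ν) (k : ℕ)
    (hδ : ((k:ℝ) - a)^2 ≤ a) :
    ((k:ℝ)) ^ ((k:ℝ)) * ((k:ℝ) + ν) ^ ((k:ℝ) + ν) ≤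
      Real.exp (2 + 2*((k:ℝ) - a)) * a ^ ((k:ℝ)) * (a + ν) ^ ((k:ℝ) + ν) := by
  set δ := (k:ℝ) - a with hδdef
  set b := a + ν with hbdef
  have hb : 0 < b := by positivity
  have hk0 : (0:ℝ) ≤ (k:ℝ) := Nat.cast_nonneg k
  have hkν : (0:ℝ) ≤ (k:ℝ) + ν := by positivity
  have e1 : (k:ℝ) ≤ a * Real.exp (δ/a) := by
    have h := Real.add_one_le_exp (δ/a)
    have : a * (δ/a + 1) ≤ a * Real.exp (δ/a) := mul_le_mul_of_nonneg_left h ha.le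
    calc (k:ℝ) = a * (δ/a + 1) := by field_simp; rw [hδdef]; ring
      _ ≤ _ := this
  have e2 : (k:ℝ) + ν ≤ b * Real.exp (δ/b) := by
    have h := Real.add_one_le_exp (δ/b)
    have : b * (δ/b + 1) ≤ b * Real.exp (δ/b) := mul_le_mul_of_nonneg_left h hb.le
    calc (k:ℝ) + ν = b * (δ/b + 1) := by
          field_simp
          rw [hδdef, hbdef]; ring
      _ ≤ _ := this
  have p1 : ((k:ℝ)) ^ ((k:ℝ)) ≤ a ^ ((k:ℝ)) * Real.exp (δ/a * (k:ℝ)) := by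
    calc ((k:ℝ)) ^ ((k:ℝ)) ≤ (a * Real.exp (δ/a)) ^ ((k:ℝ)) :=
          Real.rpow_le_rpow hk0 e1 hk0
      _ = a ^ ((k:ℝ)) * Real.exp (δ/a * (k:ℝ)) := by
          rw [Real.mul_rpow ha.le (Real.exp_pos _).le, ← Real.exp_mul]
  have p2 : ((k:ℝ) + ν) ^ ((k:ℝ) + ν) ≤ b ^ ((k:ℝ) + ν) * Real.exp (δ/b * ((k:ℝ) + ν)) := by
    calc ((k:ℝ) + ν) ^ ((k:ℝ) + ν) ≤ (b * Real.exp (δ/b)) ^ ((k:ℝ) + ν) :=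
          Real.rpow_le_rpow hkν e2 hkν
      _ = b ^ ((k:ℝ) + ν) * Real.exp (δ/b * ((k:ℝ) + ν)) := by
          rw [Real.mul_rpow hb.le (Real.exp_pos _).le, ← Real.exp_mul]
  have hexp : Real.exp (δ/a * (k:ℝ)) * Real.exp (δ/b * ((k:ℝ) + ν)) ≤
      Real.exp (2 + 2*δ) := by
    rw [← Real.exp_add]
    apply Real.exp_le_exp.mpr
    have hexpand : δ/a * (k:ℝ) + δ/b * ((k:ℝ) + ν) = 2*δ + δ^2/a + δ^2/b := by
      have hka : (k:ℝ) = a + δ := by rw [hδdef]; ring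
      rw [hka, hbdef]
      field_simp
      ring
    have h1 : δ^2/a ≤ 1 := by rw [div_le_one ha]; exact hδ
    have h2 : δ^2/b ≤ 1 := by
      rw [div_le_one hb]
      calc δ^2 ≤ a := hδ
        _ ≤ b := by rw [hbdef]; linarith
    linarith [hexpand.le, hexpand.ge]
  calc ((k:ℝ)) ^ ((k:ℝ)) * ((k:ℝ) + ν) ^ ((k:ℝ) + ν)
      ≤ (a ^ ((k:ℝ)) * Real.exp (δ/a * (k:ℝ))) * (b ^ ((k:ℝ) + ν) * Real.exp (δ/b * ((k:ℝ) + ν))) := by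
        apply mul_le_mul p1 p2 (Real.rpow_nonneg hkν _) (by positivity)
    _ = (Real.exp (δ/a * (k:ℝ)) * Real.exp (δ/b * ((k:ℝ) + ν))) * (a ^ ((k:ℝ)) * b ^ ((k:ℝ) + ν)) := by
        ring
    _ ≤ Real.exp (2 + 2*δ) * (a ^ ((k:ℝ)) * b ^ ((k:ℝ) + ν)) := by
        apply mul_le_mul_of_nonneg_right hexp (by positivity)
    _ = Real.exp (2 + 2*δ) * a ^ ((k:ℝ)) * b ^ ((k:ℝ) + ν) := by ring

lemma term_lower {x ν a s : ℝ} (hx : 1 < x) (hν : 0 ≤ ν) (ha : 0 < a)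
    (hab : a * (a + ν) = (x/2)^2) (hs : s = 2*a + ν)
    (k : ℕ) (hk1 : a - 1 ≤ (k:ℝ)) (hk2 : (k:ℝ) ≤ a + Real.sqrt a) :
    Real.exp (-8) / (2 * Real.sqrt 2) * (a/(a+ν)) ^ (ν/2) * Real.exp s
      / ((Real.sqrt a + 1) * Real.sqrt (a+ν))
    ≤ (x / 2) ^ (2 * (k : ℝ) + ν) / ((Nat.factorial k : ℝ) * Real.Gamma ((k : ℝ) + ν + 1)) := by
  have hx0 : (0:ℝ) < x := by linarith
  set b := a + ν with hbdef
  have hb : 0 < b := by positivity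
  have hba : a ≤ b := by simp only [hbdef]; linarith
  have hbhalf : (1:ℝ)/2 < b := by nlinarith
  have hsa : Real.sqrt a * Real.sqrt a = a := Real.mul_self_sqrt ha.le
  have hsa0 : 0 ≤ Real.sqrt a := Real.sqrt_nonneg a
  have hk0 : (0:ℝ) ≤ (k:ℝ) := Nat.cast_nonneg k
  -- δ² ≤ a
  have hδ2 : ((k:ℝ) - a)^2 ≤ a := by
    rcases le_or_gt a (k:ℝ) with h | h
    · nlinarith
    · nlinarith
  -- Gamma bounds
  have hg1 : (Nat.factorial k : ℝ) ≤
      Real.exp 3 * Real.sqrt ((k:ℝ)+1) * ((k:ℝ) / Real.exp 1) ^ ((k:ℝ)) := by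
    rw [← Real.Gamma_nat_eq_factorial k]
    exact gamma_stirling hk0
  have hg2 : Real.Gamma ((k:ℝ) + ν + 1) ≤
      Real.exp 3 * Real.sqrt ((k:ℝ)+ν+1) * (((k:ℝ)+ν) / Real.exp 1) ^ ((k:ℝ)+ν) := by
    exact gamma_stirling (by positivity)
  -- rewrite the / exp parts
  have he1 : ((k:ℝ) / Real.exp 1) ^ ((k:ℝ)) = (k:ℝ) ^ ((k:ℝ)) / Real.exp ((k:ℝ)) := by
    rw [Real.div_rpow hk0 (Real.exp_pos 1).le, Real.exp_one_rpow]
  have he2 : (((k:ℝ)+ν) / Real.exp 1) ^ ((k:ℝ)+ν)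
      = ((k:ℝ)+ν) ^ ((k:ℝ)+ν) / Real.exp ((k:ℝ)+ν) := by
    rw [Real.div_rpow (by positivity) (Real.exp_pos 1).le, Real.exp_one_rpow]
  -- denominator upper bound
  have hcore := core_ineq ha hν k hδ2
  have hfacpos : (0:ℝ) < (Nat.factorial k : ℝ) := by positivity
  have hGpos : (0:ℝ) < Real.Gamma ((k:ℝ) + ν + 1) := Real.Gamma_pos_of_pos (by positivity)
  have hsk1 : Real.sqrt ((k:ℝ)+1) ≤ Real.sqrt a + 1 := by
    have h1 : (k:ℝ) + 1 ≤ (Real.sqrt a + 1)^2 := by nlinarith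
    calc Real.sqrt ((k:ℝ)+1) ≤ Real.sqrt ((Real.sqrt a + 1)^2) := Real.sqrt_le_sqrt h1
      _ = Real.sqrt a + 1 := Real.sqrt_sq (by positivity)
  have hsk2 : Real.sqrt ((k:ℝ)+ν+1) ≤ 2 * Real.sqrt 2 * Real.sqrt b := by
    have h1 : (k:ℝ) + ν + 1 ≤ 8 * b := by
      have h2 : Real.sqrt a ≤ (a+1)/2 := by nlinarith [sq_nonneg (Real.sqrt a - 1)]
      simp only [hbdef] at *
      nlinarith
    calc Real.sqrt ((k:ℝ)+ν+1) ≤ Real.sqrt (8*b) := Real.sqrt_le_sqrt h1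
      _ = 2 * Real.sqrt 2 * Real.sqrt b := by
          rw [show (8:ℝ)*b = (2*Real.sqrt 2)^2 * b by
            rw [mul_pow]; rw [sq_sqrt (by norm_num : (0:ℝ) ≤ 2)]; ring,
            Real.sqrt_mul (by positivity), Real.sqrt_sq (by positivity)]
  -- denominator chain
  have hden : (Nat.factorial k : ℝ) * Real.Gamma ((k:ℝ) + ν + 1)
      ≤ Real.exp 8 / Real.exp s * ((Real.sqrt a + 1) * (2 * Real.sqrt 2 * Real.sqrt b))
          * (a ^ ((k:ℝ)) * b ^ ((k:ℝ)+ν)) := by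
    have hstep1 : (Nat.factorial k : ℝ) * Real.Gamma ((k:ℝ) + ν + 1)
        ≤ (Real.exp 3 * Real.sqrt ((k:ℝ)+1) * ((k:ℝ) ^ ((k:ℝ)) / Real.exp ((k:ℝ))))
          * (Real.exp 3 * Real.sqrt ((k:ℝ)+ν+1) * (((k:ℝ)+ν) ^ ((k:ℝ)+ν) / Real.exp ((k:ℝ)+ν))) := by
      rw [← he1, ← he2]
      exact mul_le_mul hg1 hg2 hGpos.le (by positivity)
    refine hstep1.trans ?_
    have hexps : Real.exp ((k:ℝ)) * Real.exp ((k:ℝ)+ν) = Real.exp (s + 2*((k:ℝ)-a)) := by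
      rw [← Real.exp_add, hs]; ring_nf
    have hrw : (Real.exp 3 * Real.sqrt ((k:ℝ)+1) * ((k:ℝ) ^ ((k:ℝ)) / Real.exp ((k:ℝ))))
          * (Real.exp 3 * Real.sqrt ((k:ℝ)+ν+1) * (((k:ℝ)+ν) ^ ((k:ℝ)+ν) / Real.exp ((k:ℝ)+ν)))
        = Real.exp 6 * (Real.sqrt ((k:ℝ)+1) * Real.sqrt ((k:ℝ)+ν+1))
          * (((k:ℝ)) ^ ((k:ℝ)) * ((k:ℝ)+ν) ^ ((k:ℝ)+ν)) / Real.exp (s + 2*((k:ℝ)-a)) := by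
      rw [← hexps, show Real.exp 6 = Real.exp 3 * Real.exp 3 by
        rw [← Real.exp_add]; norm_num]
      field_simp
    rw [hrw]
    have hnn : (0:ℝ) < Real.exp (s + 2*((k:ℝ)-a)) := Real.exp_pos _
    rw [div_le_iff₀ hnn]
    calc Real.exp 6 * (Real.sqrt ((k:ℝ)+1) * Real.sqrt ((k:ℝ)+ν+1))
          * (((k:ℝ)) ^ ((k:ℝ)) * ((k:ℝ)+ν) ^ ((k:ℝ)+ν))
        ≤ Real.exp 6 * ((Real.sqrt a + 1) * (2 * Real.sqrt 2 * Real.sqrt b))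
          * (Real.exp (2 + 2*((k:ℝ)-a)) * a ^ ((k:ℝ)) * b ^ ((k:ℝ)+ν)) := by
          apply mul_le_mul
          · apply mul_le_mul_of_nonneg_left _ (Real.exp_pos 6).le
            apply mul_le_mul hsk1 hsk2 (Real.sqrt_nonneg _) (by positivity)
          · exact hcore
          · positivity
          · positivity
      _ = Real.exp 8 / Real.exp s * ((Real.sqrt a + 1) * (2 * Real.sqrt 2 * Real.sqrt b))
          * (a ^ ((k:ℝ)) * b ^ ((k:ℝ)+ν)) * Real.exp (s + 2*((k:ℝ)-a)) := by
          rw [show Real.exp (2 + 2*((k:ℝ)-a)) =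
              Real.exp 8 / Real.exp s * Real.exp (s + 2*((k:ℝ)-a)) / Real.exp 6 by
            rw [div_mul_eq_mul_div, div_div, ← Real.exp_add, ← Real.exp_add, eq_div_iff
              (Real.exp_pos _).ne', ← Real.exp_add]
            ring_nf]
          field_simp
  -- numerator identity
  have hnum : (x / 2) ^ (2 * (k : ℝ) + ν)
      = (a/b) ^ (ν/2) * (a ^ ((k:ℝ)) * b ^ ((k:ℝ)+ν)) := by
    have hx2 : (x/2) ^ ((2:ℝ)) = a * b := by
      rw [Real.rpow_two]; exact hab.symm
    calc (x / 2) ^ (2 * (k : ℝ) + ν)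
        = (x/2) ^ ((2:ℝ) * ((k:ℝ) + ν/2)) := by ring_nf
      _ = ((x/2) ^ ((2:ℝ))) ^ ((k:ℝ) + ν/2) := Real.rpow_mul (by positivity) _ _
      _ = (a*b) ^ ((k:ℝ) + ν/2) := by rw [hx2]
      _ = a ^ ((k:ℝ) + ν/2) * b ^ ((k:ℝ) + ν/2) := Real.mul_rpow ha.le hb.le
      _ = (a/b) ^ (ν/2) * (a ^ ((k:ℝ)) * b ^ ((k:ℝ)+ν)) := by
          have e1 : a ^ ((k:ℝ) + ν/2) = a ^ ((k:ℝ)) * a ^ (ν/2) := Real.rpow_add ha _ _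
          have e2 : b ^ ((k:ℝ) + ν/2) = b ^ ((k:ℝ)+ν) / b ^ (ν/2) := by
            rw [← Real.rpow_sub hb]; ring_nf
          have e3 : (a/b) ^ (ν/2) = a^(ν/2)/b^(ν/2) := Real.div_rpow ha.le hb.le (ν/2)
          have hbp : (0:ℝ) < b ^ (ν/2) := Real.rpow_pos_of_pos hb _
          rw [e1, e2, e3]
          field_simp
  -- conclude
  have hdenpos : (0:ℝ) < (Nat.factorial k : ℝ) * Real.Gamma ((k:ℝ) + ν + 1) := by positivity
  rw [div_le_div_iff₀ (by positivity) hdenpos, hnum]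
  have hP : (0:ℝ) < Real.exp (-8) / (2 * Real.sqrt 2) * (a/b) ^ (ν/2) * Real.exp s := by
    have := Real.rpow_pos_of_pos (div_pos ha hb) (ν/2)
    positivity
  calc Real.exp (-8) / (2 * Real.sqrt 2) * (a/b) ^ (ν/2) * Real.exp s
        * ((Nat.factorial k : ℝ) * Real.Gamma ((k:ℝ) + ν + 1))
      ≤ Real.exp (-8) / (2 * Real.sqrt 2) * (a/b) ^ (ν/2) * Real.exp s
        * (Real.exp 8 / Real.exp s * ((Real.sqrt a + 1) * (2 * Real.sqrt 2 * Real.sqrt b))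
          * (a ^ ((k:ℝ)) * b ^ ((k:ℝ)+ν))) := mul_le_mul_of_nonneg_left hden hP.le
    _ = (a/b) ^ (ν/2) * (a ^ ((k:ℝ)) * b ^ ((k:ℝ)+ν)) * ((Real.sqrt a + 1) * Real.sqrt b) := by
        have hs2 : Real.sqrt 2 ≠ 0 := by positivity
        have hse : Real.exp s ≠ 0 := (Real.exp_pos s).ne'
        rw [Real.exp_neg]
        field_simp
    _ = _ := by ring

theorem besselI_generic_lower_bound :
    ∃ c : ℝ, 0 < c ∧ ∀ x ν : ℝ, 1 < x → 0 ≤ ν →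
      c * ((Real.sqrt (x ^ 2 + ν ^ 2) - ν) / x) ^ (ν + 1/2)
        * Real.exp (Real.sqrt (x ^ 2 + ν ^ 2)) / Real.sqrt x ≤ besselI ν x := by
  refine ⟨Real.exp (-11), Real.exp_pos _, fun x ν hx hν => ?_⟩
  have hx0 : (0:ℝ) < x := by linarith
  set s := Real.sqrt (x^2 + ν^2) with hsdef
  have hs0 : 0 ≤ s := Real.sqrt_nonneg _
  have hs2 : s^2 = x^2 + ν^2 := Real.sq_sqrt (by positivity)
  have hsν : ν < s := by nlinarith
  have hsx : x ≤ s := by nlinarith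
  set a := (s - ν)/2 with hadef
  set b := a + ν with hbdef
  have ha : 0 < a := by simp only [hadef]; linarith
  have hb : 0 < b := by positivity
  have hs_eq : s = 2*a + ν := by simp only [hadef]; ring
  have hab : a * (a + ν) = (x/2)^2 := by
    have h1 : a * (a + ν) = (s^2 - ν^2)/4 := by simp only [hadef]; ring
    rw [h1, hs2]; ring
  have hba : a ≤ b := by simp only [hbdef]; linarith
  have hx2 : x^2 = 4*(a*b) := by rw [← hbdef] at hab; nlinarith
  have hsa0 : 0 ≤ Real.sqrt a := Real.sqrt_nonneg a
  have hsaa : Real.sqrt a * Real.sqrt a = a := Real.mul_self_sqrt ha.le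
  set N := ⌊a⌋₊ with hNdef
  set M := ⌊Real.sqrt a⌋₊ + 1 with hMdef
  set P := Real.exp (-8) / (2 * Real.sqrt 2) * (a/b) ^ (ν/2) * Real.exp s
      / ((Real.sqrt a + 1) * Real.sqrt b) with hPdef
  have hA1 : 0 < (a/b) ^ (ν/2) := Real.rpow_pos_of_pos (div_pos ha hb) _
  have hPpos : 0 < P := by
    simp only [hPdef]
    positivity
  -- per-term bound on the window
  have hterm : ∀ k ∈ Finset.Ico N (N + M),
      P ≤ (x / 2) ^ (2 * (k : ℝ) + ν)
        / ((Nat.factorial k : ℝ) * Real.Gamma ((k : ℝ) + ν + 1)) := by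
    intro k hk
    rw [Finset.mem_Ico] at hk
    have hk1 : a - 1 ≤ (k:ℝ) := by
      have h1 : a - 1 < (N:ℝ) := Nat.sub_one_lt_floor a
      have h2 : (N:ℝ) ≤ (k:ℝ) := by exact_mod_cast hk.1
      linarith
    have hk2 : (k:ℝ) ≤ a + Real.sqrt a := by
      have h1 : k ≤ N + ⌊Real.sqrt a⌋₊ := by omega
      have h2 : (k:ℝ) ≤ (N:ℝ) + (⌊Real.sqrt a⌋₊:ℝ) := by exact_mod_cast h1
      have h3 : (N:ℝ) ≤ a := Nat.floor_le ha.le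
      have h4 : ((⌊Real.sqrt a⌋₊:ℕ):ℝ) ≤ Real.sqrt a := Nat.floor_le hsa0
      linarith
    exact term_lower hx hν ha hab hs_eq k hk1 hk2
  -- sum over the window
  have hcard : (Finset.Ico N (N + M)).card = M := by rw [Nat.card_Ico]; omega
  have hsum1 : (M:ℝ) * P ≤ ∑ k ∈ Finset.Ico N (N + M),
      (x / 2) ^ (2 * (k : ℝ) + ν) / ((Nat.factorial k : ℝ) * Real.Gamma ((k : ℝ) + ν + 1)) := by
    have := Finset.card_nsmul_le_sum (Finset.Ico N (N + M)) _ P hterm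
    rwa [hcard, nsmul_eq_mul] at this
  have hsum2 : ∑ k ∈ Finset.Ico N (N + M),
      (x / 2) ^ (2 * (k : ℝ) + ν) / ((Nat.factorial k : ℝ) * Real.Gamma ((k : ℝ) + ν + 1))
      ≤ besselI ν x := by
    rw [besselI]
    exact Summable.sum_le_tsum _ (fun k _ => (besselI_term_pos hν hx0 k).le) (besselI_summable hν hx0)
  have hM : (Real.sqrt a + 1)/2 ≤ (M:ℝ) := by
    have h1 : Real.sqrt a < (⌊Real.sqrt a⌋₊:ℝ) + 1 := Nat.lt_floor_add_one _
    have h2 : (1:ℝ) ≤ (M:ℝ) := by exact_mod_cast Nat.le_add_left 1 ⌊Real.sqrt a⌋₊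
    have h3 : (M:ℝ) = (⌊Real.sqrt a⌋₊:ℝ) + 1 := by simp only [hMdef]; push_cast; ring
    linarith
  have hI : (Real.sqrt a + 1)/2 * P ≤ besselI ν x := by
    calc (Real.sqrt a + 1)/2 * P ≤ (M:ℝ) * P := mul_le_mul_of_nonneg_right hM hPpos.le
      _ ≤ _ := le_trans hsum1 hsum2
  have hIval : (Real.sqrt a + 1)/2 * P
      = Real.exp (-8) / (4 * Real.sqrt 2) * (a/b) ^ (ν/2) * Real.exp s / Real.sqrt b := by
    simp only [hPdef]
    have h1 : Real.sqrt a + 1 ≠ 0 := by positivity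
    have h2 : Real.sqrt b ≠ 0 := by positivity
    have h3 : Real.sqrt 2 ≠ 0 := by positivity
    field_simp
    ring
  rw [hIval] at hI
  -- rewrite the left-hand side
  have hsub : s - ν = 2*a := by simp only [hadef]; ring
  have hsqab : (s - ν)/x = Real.sqrt (a/b) := by
    rw [hsub]
    have h1 : a/b = (2*a/x)^2 := by
      rw [div_pow, div_eq_div_iff hb.ne' (by positivity)]
      linear_combination a * hx2
    rw [h1, Real.sqrt_sq (by positivity)]
  have hpow : ((s - ν)/x) ^ (ν + 1/2)
      = (a/b) ^ (ν/2) * (a/b) ^ ((1:ℝ)/4) := by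
    rw [hsqab, Real.sqrt_eq_rpow, ← Real.rpow_mul (by positivity : (0:ℝ) ≤ a/b),
      show (1:ℝ)/2 * (ν + 1/2) = ν/2 + 1/4 by ring,
      Real.rpow_add (div_pos ha hb)]
  -- key quarter-power identity
  have hq : (a/b) ^ ((1:ℝ)/4) * Real.sqrt b = Real.sqrt x / Real.sqrt 2 := by
    have h14 : (a/b) ^ ((1:ℝ)/4) = Real.sqrt (Real.sqrt (a/b)) := by
      rw [Real.sqrt_eq_rpow, Real.sqrt_eq_rpow, ← Real.rpow_mul (by positivity : (0:ℝ) ≤ a/b)]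
      norm_num
    rw [h14, ← hsqab, hsub]
    rw [← Real.sqrt_mul (by positivity : (0:ℝ) ≤ 2*a/x) b]
    have hval : 2*a/x * b = x/2 := by
      field_simp
      linarith [hx2]
    rw [hval, show x/2 = x/2 from rfl]
    rw [Real.sqrt_div hx0.le 2]
  -- final comparison
  refine le_trans ?_ hI
  rw [hpow]
  have hqd : (a/b) ^ ((1:ℝ)/4) = Real.sqrt x / (Real.sqrt 2 * Real.sqrt b) := by
    rw [eq_div_iff (by positivity)]
    calc (a/b) ^ ((1:ℝ)/4) * (Real.sqrt 2 * Real.sqrt b)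
        = ((a/b) ^ ((1:ℝ)/4) * Real.sqrt b) * Real.sqrt 2 := by ring
      _ = Real.sqrt x / Real.sqrt 2 * Real.sqrt 2 := by rw [hq]
      _ = Real.sqrt x := by
          field_simp
  rw [hqd]
  have hsx0 : 0 < Real.sqrt x := Real.sqrt_pos.mpr hx0
  have hsb0 : 0 < Real.sqrt b := Real.sqrt_pos.mpr hb
  have hs20 : 0 < Real.sqrt 2 := by positivity
  have hlhs : Real.exp (-11) * ((a/b) ^ (ν/2) * (Real.sqrt x / (Real.sqrt 2 * Real.sqrt b)))
      * Real.exp s / Real.sqrt x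
      = Real.exp (-11) / Real.sqrt 2 * ((a/b) ^ (ν/2) * Real.exp s / Real.sqrt b) := by
    field_simp
  have hrhs : Real.exp (-8) / (4 * Real.sqrt 2) * (a/b) ^ (ν/2) * Real.exp s / Real.sqrt b
      = Real.exp (-8) / (4 * Real.sqrt 2) * ((a/b) ^ (ν/2) * Real.exp s / Real.sqrt b) := by
    ring
  rw [hlhs, hrhs]
  apply mul_le_mul_of_nonneg_right _ (by positivity)
  rw [div_le_div_iff₀ hs20 (by positivity)]
  have he3 : Real.exp (-8) = Real.exp (-11) * Real.exp 3 := by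
    rw [← Real.exp_add]; norm_num
  have h4 : (4:ℝ) ≤ Real.exp 3 := by nlinarith [Real.add_one_le_exp (3:ℝ)]
  nlinarith [mul_nonneg (mul_nonneg (Real.exp_pos (-11)).le hs20.le) (sub_nonneg.mpr h4)]
end

section
/- For all real x ≥ 0 and y ≥ 1, one has ((√(x² + y²) + y) / (√(x² + (y - 1/2)²) + (y - 1/2)))^y ≤ e, where e is Euler's number. -/
theorem simple_inequality (x y : ℝ) (hx : 0 ≤ x) (hy : 1 ≤ y) :
    ((Real.sqrt (x ^ 2 + y ^ 2) + y) /
        (Real.sqrt (x ^ 2 + (y - 1/2) ^ 2) + (y - 1/2))) ^ y ≤ Real.exp 1 := by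
  set s1 := Real.sqrt (x ^ 2 + (y - 1/2) ^ 2) with hs1
  set s2 := Real.sqrt (x ^ 2 + y ^ 2) with hs2
  have hy0 : (0:ℝ) < y := by linarith
  have h1 : s1 ^ 2 = x ^ 2 + (y - 1/2) ^ 2 := Real.sq_sqrt (by positivity)
  have h2 : s2 ^ 2 = x ^ 2 + y ^ 2 := Real.sq_sqrt (by positivity)
  have hs1n : 0 ≤ s1 := Real.sqrt_nonneg _
  have hs2n : 0 ≤ s2 := Real.sqrt_nonneg _
  have hge : y - 1/2 ≤ s1 := by nlinarith
  have hb : s2 ≤ s1 + 1/2 := by nlinarith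
  have ha : 0 < s1 + (y - 1/2) := by linarith
  have hratio : (s2 + y) / (s1 + (y - 1/2)) ≤ (y + 1) / y := by
    rw [div_le_div_iff₀ ha hy0]
    nlinarith
  have hbase : 0 ≤ (s2 + y) / (s1 + (y - 1/2)) := by positivity
  have h3 : ((s2 + y) / (s1 + (y - 1/2))) ^ y ≤ ((y + 1) / y) ^ y :=
    Real.rpow_le_rpow hbase hratio (by linarith)
  have h4 : ((y + 1) / y) ^ y = Real.exp (Real.log ((y + 1) / y) * y) :=
    Real.rpow_def_of_pos (by positivity) y
  have hlog : Real.log ((y + 1) / y) ≤ 1 / y := by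
    have h5 := Real.log_le_sub_one_of_pos (show (0:ℝ) < (y + 1) / y by positivity)
    have h6 : (y + 1) / y - 1 = 1 / y := by field_simp; ring
    linarith
  have h7 : Real.log ((y + 1) / y) * y ≤ 1 := by
    have := mul_le_mul_of_nonneg_left hlog hy0.le
    have h8 : y * (1 / y) = 1 := by field_simp
    linarith
  calc ((s2 + y) / (s1 + (y - 1/2))) ^ y ≤ ((y + 1) / y) ^ y := h3
    _ = Real.exp (Real.log ((y + 1) / y) * y) := h4
    _ ≤ Real.exp 1 := Real.exp_le_exp.mpr h7
end

section
/- Let x > 0 and α > 0 be real numbers, and set φ* = arccos((√(x² + (α/2)²) - α/2)/x), which lies in (0, π/2). Then sin² φ* = (α/x) · cos φ*, and for every φ ∈ [0, π] one has (sin φ)^α · e^{x cos φ} ≤ (sin φ*)^α · e^{x cos φ*}; that is, φ* maximizes the function φ ↦ (sin φ)^α e^{x cos φ} on [0, π]. -/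
theorem optimal_angle (x α : ℝ) (hx : 0 < x) (hα : 0 < α)
    (φs : ℝ) (hφs : φs = Real.arccos ((Real.sqrt (x ^ 2 + (α / 2) ^ 2) - α / 2) / x)) :
    0 < φs ∧ φs < Real.pi / 2 ∧
    Real.sin φs ^ 2 = (α / x) * Real.cos φs ∧
    ∀ φ ∈ Set.Icc (0 : ℝ) Real.pi,
      Real.sin φ ^ α * Real.exp (x * Real.cos φ) ≤
        Real.sin φs ^ α * Real.exp (x * Real.cos φs) := by
  set a := α / 2 with ha
  have ha0 : 0 < a := by positivity
  set s := Real.sqrt (x ^ 2 + a ^ 2) with hsdef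
  have hs2 : s ^ 2 = x ^ 2 + a ^ 2 := Real.sq_sqrt (by positivity)
  have hs0 : 0 < s := Real.sqrt_pos.mpr (by positivity)
  have hsa : a < s := by nlinarith
  set c := (s - a) / x with hc
  have hc0 : 0 < c := div_pos (by linarith) hx
  have hsxa : s < x + a := by nlinarith
  have hc1 : c < 1 := (div_lt_one hx).mpr (by linarith)
  have hcos : Real.cos φs = c := by
    rw [hφs]; exact Real.cos_arccos (by linarith) hc1.le
  have hφs0 : 0 < φs := by rw [hφs]; exact Real.arccos_pos.mpr hc1
  have hφs2 : φs < Real.pi / 2 := by rw [hφs]; exact Real.arccos_lt_pi_div_two.mpr hc0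
  -- quadratic identity
  have hα2 : α = 2 * a := by rw [ha]; ring
  have hquad : x * c ^ 2 + α * c = x := by
    rw [hc]; field_simp
    linear_combination hs2 + (s - a) * hα2
  have hsin2 : Real.sin φs ^ 2 = 1 - c ^ 2 := by
    have := Real.sin_sq_add_cos_sq φs; rw [hcos] at this; linarith
  have hthird : Real.sin φs ^ 2 = (α / x) * Real.cos φs := by
    rw [hsin2, hcos]; field_simp; nlinarith
  refine ⟨hφs0, hφs2, hthird, ?_⟩
  clear_value a s c
  clear hsdef ha hs2 hs0 hsa hsxa hα2 hφs
  have hS0 : 0 < Real.sin φs :=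
    Real.sin_pos_of_pos_of_lt_pi hφs0 (by linarith [Real.pi_pos])
  set S := Real.sin φs with hS
  have hS2 : S ^ 2 = 1 - c ^ 2 := hsin2
  clear_value S
  intro φ hφ
  obtain ⟨h0, hπ⟩ := hφ
  have hsφ : 0 ≤ Real.sin φ := Real.sin_nonneg_of_nonneg_of_le_pi h0 hπ
  rcases eq_or_lt_of_le hsφ with h | h
  · rw [← h, Real.zero_rpow hα.ne', zero_mul]
    positivity
  · set t := Real.sin φ with ht
    set u := Real.cos φ with hu
    have hu2 : t ^ 2 = 1 - u ^ 2 := by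
      have := Real.sin_sq_add_cos_sq φ; nlinarith
    have hcosφ : Real.cos φ = u := rfl
    clear_value t u
    rw [Real.rpow_def_of_pos h, Real.rpow_def_of_pos hS0, ← Real.exp_add, ← Real.exp_add,
      Real.exp_le_exp]
    -- key log inequality
    have hS2pos : 0 < S ^ 2 := by positivity
    have key := Real.log_le_sub_one_of_pos (show 0 < t ^ 2 / S ^ 2 by positivity)
    have hlog : Real.log (t ^ 2 / S ^ 2) = 2 * Real.log t - 2 * Real.log S := by
      rw [Real.log_div (by positivity) (by positivity), Real.log_pow, Real.log_pow]
      push_cast; ring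
    rw [hlog] at key
    have key2 : (2 * Real.log t - 2 * Real.log S) * S ^ 2 ≤ t ^ 2 - S ^ 2 := by
      have h2 := mul_le_mul_of_nonneg_right key hS2pos.le
      have h3 : (t ^ 2 / S ^ 2 - 1) * S ^ 2 = t ^ 2 - S ^ 2 := by field_simp
      linarith
    have hS2x : x * S ^ 2 = α * c := by
      rw [hS2]; linear_combination -hquad
    rw [hcos]
    have e1 : (2 * Real.log t - 2 * Real.log S) * (α * c) ≤ x * (c ^ 2 - u ^ 2) := by
      calc (2 * Real.log t - 2 * Real.log S) * (α * c)
          = ((2 * Real.log t - 2 * Real.log S) * S ^ 2) * x := by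
            rw [← hS2x]; ring
        _ ≤ (t ^ 2 - S ^ 2) * x := mul_le_mul_of_nonneg_right key2 hx.le
        _ = x * (c ^ 2 - u ^ 2) := by rw [hu2, hS2]; ring
    have e2 : 2 * c * (Real.log t * α + x * u) ≤ 2 * c * (Real.log S * α + x * c) := by
      nlinarith [e1, mul_nonneg hx.le (sq_nonneg (c - u))]
    exact le_of_mul_le_mul_left e2 (by positivity)
end

section
/- Let d ≥ 1 be an integer, σ > 0, and μ ∈ ℝ^d. Let γ_μ be the Gaussian product measure on ℝ^d with mean μ and covariance σ² times the identity, and let γ_0 be the one with mean 0 and the same covariance. Then for every real t ≥ 0: γ_μ({y ∈ ℝ^d : ‖y‖ ≥ t}) ≥ γ_0({y ∈ ℝ^d : ‖y‖ ≥ t}) (Euclidean norm); that is, the noncentral d-dimensional chi distribution stochastically dominates the central d-dimensional chi distribution with the same standard deviation. -/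
open MeasureTheory ProbabilityTheory
open scoped NNReal

lemma cont_pdf (m : ℝ) (v : ℝ≥0) : Continuous (gaussianPDFReal m v) := by
  unfold gaussianPDFReal
  fun_prop

lemma pdf_le {v : ℝ≥0} (hv : v ≠ 0) {x y : ℝ} (h : x ^ 2 ≤ y ^ 2) :
    gaussianPDFReal 0 v y ≤ gaussianPDFReal 0 v x := by
  have hv' : (0:ℝ) < v := by positivity
  unfold gaussianPDFReal
  have : -(y - 0) ^ 2 ≤ -(x - 0) ^ 2 := by nlinarith
  gcongr

lemma central_max {v : ℝ≥0} (hv : v ≠ 0) {s a : ℝ} (hs : 0 ≤ s) (ha : 0 ≤ a) :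
    ∫ x in (-s - a)..(s - a), gaussianPDFReal 0 v x
      ≤ ∫ x in (-s)..s, gaussianPDFReal 0 v x := by
  set φ := gaussianPDFReal 0 v with hφ
  set F : ℝ → ℝ := fun u => ∫ x in (0:ℝ)..u, φ x with hFdef
  have hF : ∀ u, HasDerivAt F (φ u) u := fun u =>
    ((cont_pdf 0 v).integral_hasStrictDerivAt 0 u).hasDerivAt
  set g : ℝ → ℝ := fun b => F (s - b) - F (-s - b) with hgdef
  have hg : ∀ b, HasDerivAt g (φ (-s - b) - φ (s - b)) b := by
    intro b
    have h1 : HasDerivAt (fun b => F (s - b)) (φ (s - b) * (-1)) b :=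
      (hF (s - b)).comp b (((hasDerivAt_id b).const_sub s))
    have h2 : HasDerivAt (fun b => F (-s - b)) (φ (-s - b) * (-1)) b :=
      (hF (-s - b)).comp b (((hasDerivAt_id b).const_sub (-s)))
    have := h1.sub h2
    rw [show φ (-s - b) - φ (s - b) = φ (s - b) * (-1) - φ (-s - b) * (-1) by ring]
    exact this
  have hanti : AntitoneOn g (Set.Ici 0) := by
    apply antitoneOn_of_deriv_nonpos (convex_Ici 0)
    · exact Continuous.continuousOn
        (continuous_iff_continuousAt.2 fun b => (hg b).continuousAt)
    · exact fun b _ => (hg b).differentiableAt.differentiableWithinAt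
    · intro b hb
      rw [interior_Ici] at hb
      rw [(hg b).deriv]
      have h2 : (s - b) ^ 2 ≤ (-s - b) ^ 2 := by nlinarith [le_of_lt (show 0 < b from hb)]
      have := pdf_le hv h2
      linarith
  have key : g a ≤ g 0 := hanti (Set.self_mem_Ici) (Set.mem_Ici.2 ha) ha
  have hInt : ∀ p q : ℝ, IntervalIntegrable φ volume p q := fun p q =>
    (cont_pdf 0 v).intervalIntegrable p q
  have hsplit : ∀ p q : ℝ, ∫ x in p..q, φ x = F q - F p := by
    intro p q
    rw [hFdef]
    rw [← intervalIntegral.integral_interval_sub_left (hInt 0 q) (hInt 0 p)]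
  have k2 : F (s - a) - F (-s - a) ≤ F (s - 0) - F (-s - 0) := key
  rw [hsplit, hsplit]
  norm_num at k2
  linarith

lemma gauss_sq_symm {v : ℝ≥0} (hv : v ≠ 0) (a r : ℝ) :
    gaussianReal a v {x | x ^ 2 < r} = gaussianReal (-a) v {x | x ^ 2 < r} := by
  have hS : MeasurableSet {x : ℝ | x ^ 2 < r} :=
    measurableSet_lt (by fun_prop) measurable_const
  have hmap := gaussianReal_map_const_mul (μ := -a) (v := v) (-1)
  rw [show (NNReal.mk ((-1 : ℝ) ^ 2) (sq_nonneg _)) = 1 by ext; norm_num, one_mul] at hmap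
  norm_num at hmap
  rw [← hmap, Measure.map_apply (by fun_prop) hS]
  congr 1
  ext x
  simp [Set.mem_setOf_eq, neg_pow]

lemma oneD {v : ℝ≥0} (hv : v ≠ 0) (a r : ℝ) :
    gaussianReal a v {x | x ^ 2 < r} ≤ gaussianReal 0 v {x | x ^ 2 < r} := by
  -- reduce to the case 0 ≤ a
  wlog ha : 0 ≤ a with H
  · rw [gauss_sq_symm hv a r]
    exact H hv (-a) r (by linarith [lt_of_not_ge ha])
  rcases le_or_gt r 0 with hr | hr
  · have : {x : ℝ | x ^ 2 < r} = ∅ := by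
      ext x; simp only [Set.mem_setOf_eq, Set.mem_empty_iff_false, iff_false, not_lt]
      nlinarith [sq_nonneg x]
    simp [this]
  · set s := Real.sqrt r with hsdef
    have hs : 0 ≤ s := Real.sqrt_nonneg r
    have hSet : {x : ℝ | x ^ 2 < r} = Set.Ioo (-s) s := by
      ext x
      rw [Set.mem_Ioo, ← abs_lt, Set.mem_setOf_eq, hsdef, ← sq_abs x, ← Real.lt_sqrt (abs_nonneg x)]
    rw [hSet, gaussianReal_apply_eq_integral _ hv, gaussianReal_apply_eq_integral _ hv]
    apply ENNReal.ofReal_le_ofReal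
    have conv1 : ∀ (m : ℝ), ∫ x in Set.Ioo (-s) s, gaussianPDFReal m v x
        = ∫ x in (-s)..s, gaussianPDFReal m v x := by
      intro m
      rw [intervalIntegral.integral_of_le (by linarith), integral_Ioc_eq_integral_Ioo]
    rw [conv1, conv1]
    have hpdf : ∀ x, gaussianPDFReal a v x = gaussianPDFReal 0 v (x - a) := by
      intro x
      rw [gaussianPDFReal_sub x a, zero_add]
    simp_rw [hpdf]
    rw [intervalIntegral.integral_comp_sub_right (fun x => gaussianPDFReal 0 v x) a]
    exact central_max hv hs ha

lemma step {v : ℝ≥0} (hv : v ≠ 0) {n : ℕ} (ν : Fin (n + 1) → ℝ) (i : Fin (n + 1)) (r : ℝ) :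
    (Measure.pi fun j => gaussianReal (ν j) v) {y : Fin (n + 1) → ℝ | ∑ j, (y j) ^ 2 < r}
      ≤ (Measure.pi fun j => gaussianReal (Function.update ν i 0 j) v)
          {y : Fin (n + 1) → ℝ | ∑ j, (y j) ^ 2 < r} := by
  set e := MeasurableEquiv.piFinSuccAbove (fun _ : Fin (n + 1) => ℝ) i with he
  set ρ := Measure.pi (fun j : Fin n => gaussianReal (ν (i.succAbove j)) v) with hρ
  set T : Set (ℝ × (Fin n → ℝ)) := {p | p.1 ^ 2 + ∑ j, (p.2 j) ^ 2 < r} with hTdef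
  have hT : MeasurableSet T := measurableSet_lt (by fun_prop) measurable_const
  have hpre : e ⁻¹' T = {y : Fin (n + 1) → ℝ | ∑ j, (y j) ^ 2 < r} := by
    ext y
    simp only [Set.mem_preimage, hTdef, Set.mem_setOf_eq, he,
      MeasurableEquiv.piFinSuccAbove_apply, Fin.insertNthEquiv_symm_apply,
      Fin.removeNth]
    rw [Fin.sum_univ_succAbove (fun j => (y j) ^ 2) i]
  have h1 : (Measure.pi fun j => gaussianReal (ν j) v)
      {y : Fin (n + 1) → ℝ | ∑ j, (y j) ^ 2 < r} = ((gaussianReal (ν i) v).prod ρ) T := by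
    rw [← hpre,
      (measurePreserving_piFinSuccAbove (fun j => gaussianReal (ν j) v) i).measure_preimage
        hT.nullMeasurableSet]
  have hρ2 : (Measure.pi fun j : Fin n =>
      gaussianReal (Function.update ν i 0 (i.succAbove j)) v) = ρ := by
    rw [hρ]
    congr 1
    funext j
    rw [Function.update_of_ne (Fin.succAbove_ne i j)]
  have h2 : (Measure.pi fun j => gaussianReal (Function.update ν i 0 j) v)
      {y : Fin (n + 1) → ℝ | ∑ j, (y j) ^ 2 < r} = ((gaussianReal 0 v).prod ρ) T := by
    rw [← hpre,
      (measurePreserving_piFinSuccAbove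
        (fun j => gaussianReal (Function.update ν i 0 j) v) i).measure_preimage
        hT.nullMeasurableSet]
    rw [Function.update_self, hρ2]
  rw [h1, h2, Measure.prod_apply_symm hT, Measure.prod_apply_symm hT]
  apply lintegral_mono
  intro z
  have hset : (fun x => (x, z)) ⁻¹' T = {x : ℝ | x ^ 2 < r - ∑ j, (z j) ^ 2} := by
    ext x
    simp only [Set.mem_preimage, hTdef, Set.mem_setOf_eq]
    constructor <;> intro h <;> linarith
  show (gaussianReal (ν i) v) ((fun x => (x, z)) ⁻¹' T)
      ≤ (gaussianReal 0 v) ((fun x => (x, z)) ⁻¹' T)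
  rw [hset]
  exact oneD hv (ν i) _

lemma iter {v : ℝ≥0} (hv : v ≠ 0) {n : ℕ} (ν : Fin (n + 1) → ℝ) (r : ℝ) :
    (Measure.pi fun j => gaussianReal (ν j) v) {y : Fin (n + 1) → ℝ | ∑ j, (y j) ^ 2 < r}
      ≤ (Measure.pi fun _ => gaussianReal 0 v)
          {y : Fin (n + 1) → ℝ | ∑ j, (y j) ^ 2 < r} := by
  classical
  have key : ∀ s : Finset (Fin (n + 1)),
      (Measure.pi fun j => gaussianReal (ν j) v) {y : Fin (n + 1) → ℝ | ∑ j, (y j) ^ 2 < r}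
        ≤ (Measure.pi fun j => gaussianReal (if j ∈ s then 0 else ν j) v)
            {y : Fin (n + 1) → ℝ | ∑ j, (y j) ^ 2 < r} := by
    intro s
    induction s using Finset.induction_on with
    | empty => simp
    | @insert i s hi ih =>
        refine ih.trans ?_
        have hfun : (fun j => gaussianReal
              (Function.update (fun j => if j ∈ s then 0 else ν j) i 0 j) v)
            = fun j => gaussianReal (if j ∈ insert i s then 0 else ν j) v := by
          funext j
          rcases eq_or_ne j i with rfl | hj
          · simp
          · simp [Function.update_of_ne hj, Finset.mem_insert, hj]
        have := step hv (fun j => if j ∈ s then 0 else ν j) i r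
        rwa [hfun] at this
  have h := key Finset.univ
  simpa using h

/-- The norm of a noncentral `d`-dimensional Gaussian vector stochastically dominates
the norm of a central one with the same covariance. -/
theorem noncentral_chi_stochastically_dominates_central
    (d : ℕ) (hd : 1 ≤ d) (σ : ℝ) (hσ : 0 < σ) (μ : Fin d → ℝ) (t : ℝ) (ht : 0 ≤ t) :
    (Measure.pi fun _ : Fin d => gaussianReal 0 ⟨σ ^ 2, sq_nonneg σ⟩)
        {y : Fin d → ℝ | t ≤ Real.sqrt (∑ j, (y j) ^ 2)} ≤
      (Measure.pi fun j => gaussianReal (μ j) ⟨σ ^ 2, sq_nonneg σ⟩)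
        {y : Fin d → ℝ | t ≤ Real.sqrt (∑ j, (y j) ^ 2)} := by
  obtain ⟨n, rfl⟩ : ∃ n, d = n + 1 := ⟨d - 1, by omega⟩
  set v : ℝ≥0 := ⟨σ ^ 2, sq_nonneg σ⟩ with hvdef
  have hv : v ≠ 0 := by
    intro h
    have := congrArg NNReal.toReal h
    simp [hvdef] at this
    nlinarith [show σ ^ 2 = 0 from this]
  set C : Set (Fin (n + 1) → ℝ) := {y | ∑ j, (y j) ^ 2 < t ^ 2} with hCdef
  have hC : MeasurableSet C := measurableSet_lt (by fun_prop) measurable_const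
  have hBC : {y : Fin (n + 1) → ℝ | t ≤ Real.sqrt (∑ j, (y j) ^ 2)} = Cᶜ := by
    ext y
    simp only [Set.mem_setOf_eq, Set.mem_compl_iff, hCdef, not_lt]
    rw [Real.le_sqrt ht]
    exact Finset.sum_nonneg fun j _ => sq_nonneg _
  rw [hBC, prob_compl_eq_one_sub hC, prob_compl_eq_one_sub hC]
  exact tsub_le_tsub_left (iter hv μ (t ^ 2)) 1
end

section
/- Let b > 0 and let φ be a random variable taking values in [0, π] whose law has a density with respect to Lebesgue measure that is bounded above by M. Then for every measurable set A ⊆ [0, √b): P(√b · sin φ ∈ A) ≤ ∫_A (2M / √(b - x²)) dx. -/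
open MeasureTheory

private lemma volume_image_eq_lintegral_abs_deriv {s : Set ℝ} {f f' : ℝ → ℝ}
    (hs : MeasurableSet s) (hf' : ∀ x ∈ s, HasDerivWithinAt f (f' x) s x)
    (hf : Set.InjOn f s) :
    volume (f '' s) = ∫⁻ x in s, ENNReal.ofReal |f' x| := by
  have h := MeasureTheory.lintegral_image_eq_lintegral_abs_det_fderiv_mul volume hs
    (fun x hx => (hf' x hx).hasFDerivWithinAt) hf (fun _ => (1 : ENNReal))
  simpa [ContinuousLinearMap.det_toSpanSingleton, setLIntegral_one] using h

theorem sqrt_mul_sin_density_bound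
    {Ω : Type*} [MeasurableSpace Ω] (P : Measure Ω) [IsProbabilityMeasure P]
    (φ : Ω → ℝ) (hφ : Measurable φ) (hrange : ∀ ω, φ ω ∈ Set.Icc 0 Real.pi)
    (f : ℝ → ℝ) (M : ℝ)
    (hlaw : Measure.map φ P = volume.withDensity fun x => ENNReal.ofReal (f x))
    (hM : ∀ x, f x ≤ M)
    (b : ℝ) (hb : 0 < b)
    (A : Set ℝ) (hA : MeasurableSet A) (hAsub : A ⊆ Set.Ico 0 (Real.sqrt b)) :
    P {ω | Real.sqrt b * Real.sin (φ ω) ∈ A} ≤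
      ENNReal.ofReal (∫ x in A, 2 * M / Real.sqrt (b - x ^ 2)) := by
  set s := Real.sqrt b with hs_def
  have hs0 : 0 < s := Real.sqrt_pos.2 hb
  have hs2 : s ^ 2 = b := Real.sq_sqrt hb.le
  -- M is nonneg
  have hM0 : 0 ≤ M := by
    by_contra hM0
    push_neg at hM0
    have h1 : (Measure.map φ P) Set.univ = 1 := by
      rw [Measure.map_apply hφ MeasurableSet.univ]
      simp
    have hz : (fun x => ENNReal.ofReal (f x)) = 0 := by
      funext x
      exact ENNReal.ofReal_eq_zero.2 ((hM x).trans hM0.le)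
    rw [hlaw, hz, withDensity_zero] at h1
    simp at h1
  -- the density function
  set d : ℝ → ℝ := fun x => 1 / Real.sqrt (b - x ^ 2) with hd_def
  have hd0 : ∀ x, 0 ≤ d x := fun x => div_nonneg zero_le_one (Real.sqrt_nonneg _)
  set u : ℝ → ℝ := fun x => Real.arcsin (x / s) with hu_def
  set v : ℝ → ℝ := fun x => Real.pi - u x with hv_def
  -- basic bounds for x ∈ A
  have hbnd : ∀ x ∈ A, 0 ≤ x / s ∧ x / s < 1 := by
    intro x hx
    obtain ⟨hx0, hx1⟩ := hAsub hx
    exact ⟨div_nonneg hx0 hs0.le, (div_lt_one hs0).2 hx1⟩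
  -- derivative of u on A
  have hu' : ∀ x ∈ A, HasDerivWithinAt u (d x) A x := by
    intro x hx
    obtain ⟨h0, h1⟩ := hbnd x hx
    have harc : HasDerivAt Real.arcsin (1 / Real.sqrt (1 - (x / s) ^ 2)) (x / s) :=
      Real.hasDerivAt_arcsin (by linarith) (ne_of_lt h1)
    have hdiv : HasDerivAt (fun y : ℝ => y / s) (1 / s) x := by
      simpa using (hasDerivAt_id x).div_const s
    have h := harc.comp x hdiv
    have heq : 1 / Real.sqrt (1 - (x / s) ^ 2) * (1 / s) = d x := by
      have hkey : Real.sqrt (1 - (x / s) ^ 2) * s = Real.sqrt (b - x ^ 2) := by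
        have : (1 - (x / s) ^ 2) * s ^ 2 = b - x ^ 2 := by
          field_simp
          linarith [hs2]
        rw [← this, Real.sqrt_mul (by nlinarith) (s ^ 2), Real.sqrt_sq hs0.le]
      rw [hd_def]
      rw [div_mul_div_comm, one_mul, hkey]
    rw [heq] at h
    exact h.hasDerivWithinAt
  have hv' : ∀ x ∈ A, HasDerivWithinAt v (-(d x)) A x := fun x hx =>
    (hu' x hx).const_sub Real.pi
  -- injectivity
  have huinj : Set.InjOn u A := by
    intro x hx y hy h
    obtain ⟨hx0, hx1⟩ := hbnd x hx
    obtain ⟨hy0, hy1⟩ := hbnd y hy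
    have := congrArg Real.sin h
    rw [Real.sin_arcsin (by linarith) hx1.le, Real.sin_arcsin (by linarith) hy1.le] at this
    rw [div_eq_div_iff hs0.ne' hs0.ne'] at this
    exact mul_right_cancel₀ hs0.ne' this
  have hvinj : Set.InjOn v A := fun x hx y hy h =>
    huinj hx hy (by simpa [hv_def] using h)
  -- the image volumes
  have hIu : volume (u '' A) = ∫⁻ x in A, ENNReal.ofReal (d x) := by
    rw [volume_image_eq_lintegral_abs_deriv hA hu' huinj]
    congr 1
    funext x
    rw [abs_of_nonneg (hd0 x)]
  have hIv : volume (v '' A) = ∫⁻ x in A, ENNReal.ofReal (d x) := by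
    rw [volume_image_eq_lintegral_abs_deriv hA hv' hvinj]
    congr 1
    funext x
    rw [abs_neg, abs_of_nonneg (hd0 x)]
  -- the pulled-back set
  set T : Set ℝ := {θ | s * Real.sin θ ∈ A} ∩ Set.Icc 0 Real.pi with hT_def
  have hTmeas : MeasurableSet T :=
    ((Real.measurable_sin.const_mul s) hA).inter measurableSet_Icc
  have hTsub : T ⊆ u '' A ∪ v '' A := by
    rintro θ ⟨hθA, hθ0, hθπ⟩
    have hxA : s * Real.sin θ ∈ A := hθA
    have hxs : s * Real.sin θ / s = Real.sin θ := by
      field_simp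
    rcases le_or_gt θ (Real.pi / 2) with hle | hlt
    · left
      refine ⟨s * Real.sin θ, hxA, ?_⟩
      rw [hu_def]
      simp only
      rw [hxs, Real.arcsin_sin (by linarith [Real.pi_pos]) hle]
    · right
      refine ⟨s * Real.sin θ, hxA, ?_⟩
      rw [hv_def, hu_def]
      simp only
      rw [hxs, ← Real.sin_pi_sub θ,
        Real.arcsin_sin (by linarith [Real.pi_pos]) (by linarith)]
      ring
  have hTvol : volume T ≤ 2 * ∫⁻ x in A, ENNReal.ofReal (d x) := by
    calc volume T ≤ volume (u '' A ∪ v '' A) := measure_mono hTsub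
      _ ≤ volume (u '' A) + volume (v '' A) := measure_union_le _ _
      _ = 2 * ∫⁻ x in A, ENNReal.ofReal (d x) := by rw [hIu, hIv, two_mul]
  -- rewrite the LHS
  have hpre : {ω | Real.sqrt b * Real.sin (φ ω) ∈ A} = φ ⁻¹' T := by
    ext ω
    simp only [Set.mem_setOf_eq, Set.mem_preimage, hT_def, Set.mem_inter_iff]
    exact ⟨fun h => ⟨h, hrange ω⟩, fun h => h.1⟩
  have hLHS : P {ω | Real.sqrt b * Real.sin (φ ω) ∈ A} = ∫⁻ θ in T, ENNReal.ofReal (f θ) := by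
    rw [hpre, ← Measure.map_apply hφ hTmeas, hlaw, withDensity_apply _ hTmeas]
  -- integrability of the target integrand
  have hInt : IntegrableOn (fun x => 2 * M / Real.sqrt (b - x ^ 2)) A := by
    have h1 : IntegrableOn (fun _ : ℝ => (2 * M : ℝ)) (u '' A) := by
      rw [integrableOn_const_iff]
      right
      refine lt_of_le_of_lt (measure_mono ?_) (measure_Icc_lt_top (a := -(Real.pi/2)) (b := Real.pi/2))
      rintro θ ⟨x, _, rfl⟩
      exact ⟨Real.neg_pi_div_two_le_arcsin _, Real.arcsin_le_pi_div_two _⟩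
    have h2 := (integrableOn_image_iff_integrableOn_abs_deriv_smul hA hu' huinj
      (fun _ => (2 * M : ℝ))).1 h1
    have heq : (fun x => |d x| • (2 * M : ℝ)) = fun x => 2 * M / Real.sqrt (b - x ^ 2) := by
      funext x
      rw [abs_of_nonneg (hd0 x), smul_eq_mul, hd_def]
      ring
    rwa [heq] at h2
  -- relate lintegral and integral
  have hRHS : ∫⁻ x in A, ENNReal.ofReal (2 * M * d x) =
      ENNReal.ofReal (∫ x in A, 2 * M / Real.sqrt (b - x ^ 2)) := by
    rw [MeasureTheory.ofReal_integral_eq_lintegral_ofReal hInt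
      (Filter.Eventually.of_forall fun x =>
        div_nonneg (mul_nonneg (by norm_num) hM0) (Real.sqrt_nonneg _))]
    congr 1
    funext x
    rw [hd_def]
    ring_nf
  -- main estimate
  rw [hLHS, ← hRHS]
  calc ∫⁻ θ in T, ENNReal.ofReal (f θ)
      ≤ ∫⁻ _ in T, ENNReal.ofReal M := lintegral_mono fun θ => ENNReal.ofReal_le_ofReal (hM θ)
    _ = ENNReal.ofReal M * volume T := setLIntegral_const T _
    _ ≤ ENNReal.ofReal M * (2 * ∫⁻ x in A, ENNReal.ofReal (d x)) :=
        mul_le_mul_right hTvol _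
    _ = ∫⁻ x in A, ENNReal.ofReal M * (2 * ENNReal.ofReal (d x)) := by
        rw [lintegral_const_mul' _ _ ENNReal.ofReal_ne_top,
          lintegral_const_mul' 2 _ (by simp)]
    _ = ∫⁻ x in A, ENNReal.ofReal (2 * M * d x) := by
        congr 1
        funext x
        rw [← ENNReal.ofReal_ofNat 2, ← ENNReal.ofReal_mul (by norm_num),
          ← ENNReal.ofReal_mul hM0]
        congr 1
        ring
end

section
/- Let b₁, b₂ > 0 and let φ₁, φ₂ be independent random variables taking values in [0, π], whose laws have densities with respect to Lebesgue measure bounded above by M₁ and M₂ respectively. Then for every measurable set A ⊆ [0, π]: P(φ₁ ∈ A and √b₁ · sin φ₁ > √b₂ · sin φ₂) ≤ 4 · M₁ · M₂ · ∫_A arcsin(min{1, √(b₁/b₂) · sin φ}) dφ. -/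
open MeasureTheory ProbabilityTheory

lemma vol_sin_lt_bound {c : ℝ} (hc : 0 ≤ c) :
    volume ({y | Real.sin y < c} ∩ Set.Icc 0 Real.pi) ≤
      ENNReal.ofReal (2 * Real.arcsin (min 1 c)) := by
  set a := Real.arcsin (min 1 c) with ha
  have hmem : min 1 c ∈ Set.Icc (-1 : ℝ) 1 := ⟨le_trans (by norm_num) (le_min zero_le_one hc), min_le_left _ _⟩
  have ha0 : 0 ≤ a := Real.arcsin_nonneg.mpr (le_min zero_le_one hc)
  have hapi : a ≤ Real.pi / 2 := Real.arcsin_le_pi_div_two _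
  have hsub : {y | Real.sin y < c} ∩ Set.Icc 0 Real.pi ⊆
      Set.Icc 0 a ∪ Set.Icc (Real.pi - a) Real.pi := by
    rintro y ⟨hsy, hy0, hyπ⟩
    rcases le_or_gt y a with h | hya
    · exact Or.inl ⟨hy0, h⟩
    rcases le_or_gt (Real.pi - a) y with h | hyb
    · exact Or.inr ⟨h, hyπ⟩
    exfalso
    have halt : a < Real.pi / 2 := by linarith
    have hc1 : min 1 c < 1 := by
      by_contra h
      push_neg at h
      have : min 1 c = 1 := le_antisymm (min_le_left _ _) h
      rw [ha, this, Real.arcsin_one] at halt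
      linarith
    have hmc : min 1 c = c := min_eq_right (by
      rcases min_le_left 1 c |>.lt_or_eq with h | h
      · exact le_of_lt (by rcases lt_or_ge c 1 with h' | h'; exact h'; exact absurd (min_eq_left h') (by intro hh; rw [hh] at hc1; exact lt_irrefl 1 hc1))
      · linarith [hc1, h])
    have hsina : Real.sin a = c := by rw [ha, Real.sin_arcsin hmem.1 hmem.2, hmc]
    have hkey : c ≤ Real.sin y := by
      rcases le_or_gt y (Real.pi / 2) with hy | hy
      · have := Real.strictMonoOn_sin.monotoneOn (a := a) (b := y)
          ⟨by linarith, hapi⟩ ⟨by linarith, hy⟩ hya.le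
        rwa [hsina] at this
      · have h1 : Real.sin y = Real.sin (Real.pi - y) := (Real.sin_pi_sub y).symm
        have := Real.strictMonoOn_sin.monotoneOn (a := a) (b := Real.pi - y)
          ⟨by linarith, hapi⟩ ⟨by linarith, by linarith⟩ (by linarith)
        rw [hsina] at this
        linarith [this, h1.ge]
    exact absurd hkey (not_le.mpr hsy)
  calc volume ({y | Real.sin y < c} ∩ Set.Icc 0 Real.pi)
      ≤ volume (Set.Icc 0 a ∪ Set.Icc (Real.pi - a) Real.pi) := measure_mono hsub
    _ ≤ volume (Set.Icc 0 a) + volume (Set.Icc (Real.pi - a) Real.pi) := measure_union_le _ _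
    _ = ENNReal.ofReal a + ENNReal.ofReal a := by
        rw [Real.volume_Icc, Real.volume_Icc]
        norm_num
    _ = ENNReal.ofReal (2 * a) := by rw [← ENNReal.ofReal_add ha0 ha0]; ring_nf

theorem good_angle_density_bound
    {Ω : Type*} [MeasurableSpace Ω] (P : Measure Ω) [IsProbabilityMeasure P]
    (φ₁ φ₂ : Ω → ℝ) (hφ₁ : Measurable φ₁) (hφ₂ : Measurable φ₂)
    (hr₁ : ∀ ω, φ₁ ω ∈ Set.Icc 0 Real.pi) (hr₂ : ∀ ω, φ₂ ω ∈ Set.Icc 0 Real.pi)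
    (hindep : IndepFun φ₁ φ₂ P)
    (f₁ f₂ : ℝ → ℝ) (M₁ M₂ : ℝ)
    (hlaw₁ : Measure.map φ₁ P = volume.withDensity fun x => ENNReal.ofReal (f₁ x))
    (hlaw₂ : Measure.map φ₂ P = volume.withDensity fun x => ENNReal.ofReal (f₂ x))
    (hM₁ : ∀ x, f₁ x ≤ M₁) (hM₂ : ∀ x, f₂ x ≤ M₂)
    (b₁ b₂ : ℝ) (hb₁ : 0 < b₁) (hb₂ : 0 < b₂)
    (A : Set ℝ) (hA : MeasurableSet A) (hAsub : A ⊆ Set.Icc 0 Real.pi) :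
    P {ω | φ₁ ω ∈ A ∧ Real.sqrt b₂ * Real.sin (φ₂ ω) < Real.sqrt b₁ * Real.sin (φ₁ ω)} ≤
      ENNReal.ofReal (4 * M₁ * M₂ *
        ∫ φ in A, Real.arcsin (min 1 (Real.sqrt (b₁ / b₂) * Real.sin φ))) := by
  -- abbreviations
  set μ₁ := Measure.map φ₁ P with hμ₁
  set μ₂ := Measure.map φ₂ P with hμ₂
  haveI : IsProbabilityMeasure μ₁ := Measure.isProbabilityMeasure_map hφ₁.aemeasurable
  haveI : IsProbabilityMeasure μ₂ := Measure.isProbabilityMeasure_map hφ₂.aemeasurable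
  -- nonnegativity of the bounds
  have hM1nn : 0 ≤ M₁ := by
    by_contra h
    push_neg at h
    have hz : (fun x => ENNReal.ofReal (f₁ x)) = fun _ => (0 : ENNReal) :=
      funext fun x => ENNReal.ofReal_eq_zero.mpr ((hM₁ x).trans h.le)
    have h0 : μ₁ Set.univ = 0 := by rw [hlaw₁, hz]; simp
    rw [measure_univ] at h0
    exact one_ne_zero h0
  have hM2nn : 0 ≤ M₂ := by
    by_contra h
    push_neg at h
    have hz : (fun x => ENNReal.ofReal (f₂ x)) = fun _ => (0 : ENNReal) :=
      funext fun x => ENNReal.ofReal_eq_zero.mpr ((hM₂ x).trans h.le)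
    have h0 : μ₂ Set.univ = 0 := by rw [hlaw₂, hz]; simp
    rw [measure_univ] at h0
    exact one_ne_zero h0
  -- the event as a preimage
  set S : Set (ℝ × ℝ) := {p | p.1 ∈ A ∧ Real.sqrt b₂ * Real.sin p.2 < Real.sqrt b₁ * Real.sin p.1}
    with hSdef
  have hS : MeasurableSet S := by
    apply MeasurableSet.inter
    · exact measurable_fst hA
    · exact measurableSet_lt ((Real.measurable_sin.comp measurable_snd).const_mul _)
        ((Real.measurable_sin.comp measurable_fst).const_mul _)
  have hEeq : P {ω | φ₁ ω ∈ A ∧ Real.sqrt b₂ * Real.sin (φ₂ ω) < Real.sqrt b₁ * Real.sin (φ₁ ω)}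
      = (μ₁.prod μ₂) S := by
    have hpair : P.map (fun ω => (φ₁ ω, φ₂ ω)) = μ₁.prod μ₂ :=
      (indepFun_iff_map_prod_eq_prod_map_map hφ₁.aemeasurable hφ₂.aemeasurable).mp hindep
    rw [← hpair, Measure.map_apply (hφ₁.prodMk hφ₂) hS]
    rfl
  -- measure bounds between measures
  have hle₁ : μ₁ ≤ ENNReal.ofReal M₁ • (volume : Measure ℝ) := by
    rw [hlaw₁, ← withDensity_const]
    exact withDensity_mono (Filter.Eventually.of_forall fun x => ENNReal.ofReal_le_ofReal (hM₁ x))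
  have hle₂ : μ₂ ≤ ENNReal.ofReal M₂ • (volume : Measure ℝ) := by
    rw [hlaw₂, ← withDensity_const]
    exact withDensity_mono (Filter.Eventually.of_forall fun x => ENNReal.ofReal_le_ofReal (hM₂ x))
  -- μ₂ lives on [0, π]
  have hμ₂null : μ₂ (Set.Icc 0 Real.pi)ᶜ = 0 := by
    rw [hμ₂, Measure.map_apply hφ₂ measurableSet_Icc.compl]
    have : φ₂ ⁻¹' (Set.Icc 0 Real.pi)ᶜ = ∅ := by
      ext ω; simp [hr₂ ω]
    rw [this, measure_empty]
  -- slice bound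
  set G : ℝ → ENNReal := fun x => ENNReal.ofReal M₂ *
    ENNReal.ofReal (2 * Real.arcsin (min 1 (Real.sqrt (b₁ / b₂) * Real.sin x))) with hG
  have hslice : ∀ x, μ₂ (Prod.mk x ⁻¹' S) ≤ A.indicator G x := by
    intro x
    by_cases hx : x ∈ A
    · rw [Set.indicator_of_mem hx]
      have hpre : Prod.mk x ⁻¹' S = {y | Real.sqrt b₂ * Real.sin y < Real.sqrt b₁ * Real.sin x} := by
        ext y; simp [hSdef, hx]
      have hset : {y | Real.sqrt b₂ * Real.sin y < Real.sqrt b₁ * Real.sin x} =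
          {y | Real.sin y < Real.sqrt (b₁ / b₂) * Real.sin x} := by
        ext y
        rw [Set.mem_setOf_eq, Set.mem_setOf_eq, Real.sqrt_div hb₁.le,
          div_mul_eq_mul_div, lt_div_iff₀ (Real.sqrt_pos.mpr hb₂), mul_comm]
      rw [hpre, hset]
      set c : ℝ := Real.sqrt (b₁ / b₂) * Real.sin x with hcdef
      have hcnn : 0 ≤ c := mul_nonneg (Real.sqrt_nonneg _)
        (Real.sin_nonneg_of_nonneg_of_le_pi (hAsub hx).1 (hAsub hx).2)
      calc μ₂ {y | Real.sin y < c}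
          ≤ μ₂ (({y | Real.sin y < c} ∩ Set.Icc 0 Real.pi) ∪ (Set.Icc 0 Real.pi)ᶜ) := by
            apply measure_mono
            intro y hy
            by_cases h : y ∈ Set.Icc 0 Real.pi
            · exact Or.inl ⟨hy, h⟩
            · exact Or.inr h
        _ ≤ μ₂ ({y | Real.sin y < c} ∩ Set.Icc 0 Real.pi) + μ₂ (Set.Icc 0 Real.pi)ᶜ :=
            measure_union_le _ _
        _ = μ₂ ({y | Real.sin y < c} ∩ Set.Icc 0 Real.pi) := by rw [hμ₂null, add_zero]
        _ ≤ (ENNReal.ofReal M₂ • (volume : Measure ℝ)) ({y | Real.sin y < c} ∩ Set.Icc 0 Real.pi) :=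
            Measure.le_iff'.mp hle₂ _
        _ = ENNReal.ofReal M₂ * volume ({y | Real.sin y < c} ∩ Set.Icc 0 Real.pi) := rfl
        _ ≤ G x := by
            rw [hG]
            exact mul_le_mul_right (vol_sin_lt_bound hcnn) _
    · rw [Set.indicator_of_notMem hx]
      have : Prod.mk x ⁻¹' S = ∅ := by
        ext y; simp [hSdef, hx]
      rw [this, measure_empty]
  -- integrability of the arcsin function on A
  have hAfin : volume A ≠ ⊤ := by
    refine ne_of_lt (lt_of_le_of_lt (measure_mono hAsub) ?_)
    rw [Real.volume_Icc]; exact ENNReal.ofReal_lt_top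
  have hmeas_h : Measurable fun x => Real.arcsin (min 1 (Real.sqrt (b₁ / b₂) * Real.sin x)) :=
    Real.continuous_arcsin.measurable.comp (measurable_const.min (Real.measurable_sin.const_mul _))
  have hint : IntegrableOn (fun x => Real.arcsin (min 1 (Real.sqrt (b₁ / b₂) * Real.sin x))) A
      volume := by
    apply Measure.integrableOn_of_bounded (M := Real.pi / 2) hAfin
      hmeas_h.aestronglyMeasurable
    refine Filter.Eventually.of_forall fun x => ?_
    rw [Real.norm_eq_abs, abs_le]
    exact ⟨Real.neg_pi_div_two_le_arcsin _, Real.arcsin_le_pi_div_two _⟩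
  have hnn : ∀ x ∈ A, 0 ≤ Real.arcsin (min 1 (Real.sqrt (b₁ / b₂) * Real.sin x)) := by
    intro x hx
    exact Real.arcsin_nonneg.mpr (le_min zero_le_one (mul_nonneg (Real.sqrt_nonneg _)
      (Real.sin_nonneg_of_nonneg_of_le_pi (hAsub hx).1 (hAsub hx).2)))
  set I : ℝ := ∫ φ in A, Real.arcsin (min 1 (Real.sqrt (b₁ / b₂) * Real.sin φ)) with hI
  have hInn : 0 ≤ I := setIntegral_nonneg hA hnn
  -- lintegral of arcsin over A
  have hlin : ∫⁻ x in A, ENNReal.ofReal (Real.arcsin (min 1 (Real.sqrt (b₁ / b₂) * Real.sin x)))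
      = ENNReal.ofReal I := by
    rw [hI, ofReal_integral_eq_lintegral_ofReal hint
      ((ae_restrict_iff' hA).mpr (Filter.Eventually.of_forall hnn))]
  -- main chain
  rw [hEeq, Measure.prod_apply hS]
  calc ∫⁻ x, μ₂ (Prod.mk x ⁻¹' S) ∂μ₁
      ≤ ∫⁻ x, A.indicator G x ∂μ₁ := lintegral_mono hslice
    _ ≤ ∫⁻ x, A.indicator G x ∂(ENNReal.ofReal M₁ • (volume : Measure ℝ)) :=
        lintegral_mono' hle₁ le_rfl
    _ = ENNReal.ofReal M₁ * ∫⁻ x, A.indicator G x := lintegral_smul_measure _ _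
    _ = ENNReal.ofReal M₁ * ∫⁻ x in A, G x := by rw [lintegral_indicator hA]
    _ = ENNReal.ofReal M₁ * (ENNReal.ofReal M₂ *
        ∫⁻ x in A, ENNReal.ofReal (2 * Real.arcsin (min 1 (Real.sqrt (b₁ / b₂) * Real.sin x)))) := by
        rw [hG, lintegral_const_mul' _ _ ENNReal.ofReal_ne_top]
    _ = ENNReal.ofReal M₁ * (ENNReal.ofReal M₂ * (ENNReal.ofReal 2 *
        ∫⁻ x in A, ENNReal.ofReal (Real.arcsin (min 1 (Real.sqrt (b₁ / b₂) * Real.sin x))))) := by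
        congr 2
        rw [← lintegral_const_mul' _ _ ENNReal.ofReal_ne_top]
        exact lintegral_congr fun x => ENNReal.ofReal_mul (by norm_num)
    _ = ENNReal.ofReal M₁ * (ENNReal.ofReal M₂ * (ENNReal.ofReal 2 * ENNReal.ofReal I)) := by
        rw [hlin]
    _ = ENNReal.ofReal (M₁ * (M₂ * (2 * I))) := by
        rw [← ENNReal.ofReal_mul (by norm_num : (0:ℝ) ≤ 2), ← ENNReal.ofReal_mul hM2nn,
          ← ENNReal.ofReal_mul hM1nn]
    _ ≤ ENNReal.ofReal (4 * M₁ * M₂ * I) := by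
        apply ENNReal.ofReal_le_ofReal
        nlinarith [mul_nonneg (mul_nonneg hM1nn hM2nn) hInn]
end
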